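/- arXiv:1703.00793 — 5 statements merged into one kernel-verified Lean document; each statement's English description precedes it below -/
import Mathlib

section
/- Let R ≥ 0, and let B_R denote the open ball of radius R in ℝ³ centered at the origin. Let 1 ≤ p, q, r, r', q' ≤ ∞ satisfy 1 + 1/p = 1/r + 1/q = 1/r' + 1/q'. Then for measurable f, g on ℝ³, the convolution satisfies ‖f*g‖_{L^p(B_R^c)} ≤ 2(‖f‖_{L^r(B_{R/2}^c)}‖g‖_{L^q(ℝ³)} + ‖f‖_{L^{r'}(ℝ³)}‖g‖_{L^{q'}(B_{R/2}^c)}). -/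
/-!
With `A = {z | R / 2 ≤ ‖z‖}`: if `‖x‖ ≥ R` and `y ∉ A` then `x - y ∈ A`, so on `{x | R ≤ ‖x‖}`
the convolution `|f| ⋆ |g|` equals `(1_A |f|) ⋆ |g| + (1_Aᶜ |f|) ⋆ (1_A |g|)`, and Young's
convolution inequality bounds each term.

Young's inequality holds for the Lebesgue convolution on any group with a left- and
inversion-invariant measure. For `p = ∞` it is Hölder's inequality at each point. For `p < ∞`,
factor `|f(x - y)| |g(y)|` as
`(|f(x - y)|^r |g(y)|^q)^(1/p) * (|f(x - y)|^r)^(1 - 1/q) * (|g(y)|^q)^(1 - 1/r)`,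
apply the three-factor Hölder inequality in `y`, raise to the power `p` and integrate in `x`;
by Tonelli the first factor integrates to `‖f‖_r^r ‖g‖_q^q`.
-/

open MeasureTheory Filter
open scoped ENNReal

noncomputable section

abbrev E3 := EuclideanSpace ℝ (Fin 3)

theorem one_sub_one_div_nonneg {r : ℝ} (hr : 1 ≤ r) : 0 ≤ 1 - 1 / r :=
  sub_nonneg.2 (div_le_one_of_le₀ hr (by linarith))

section Holder

variable {α : Type*} [MeasurableSpace α] {μ : Measure α}

theorem lintegral_mul_le_eLpNorm_mul_eLpNorm {p q : ℝ≥0∞} [p.HolderConjugate q]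
    {f g : α → ℝ≥0∞} (hf : AEMeasurable f μ) (hg : AEMeasurable g μ) :
    ∫⁻ a, f a * g a ∂μ ≤ eLpNorm f p μ * eLpNorm g q μ := by
  rcases eq_or_ne p ∞ with rfl | hp
  · obtain rfl : q = 1 := (ENNReal.HolderConjugate.eq_top_iff_eq_one ∞ q).1 rfl
    rw [eLpNorm_exponent_top, eLpNorm_one_eq_lintegral_enorm, ← lintegral_const_mul'' _ hg.enorm]
    refine lintegral_mono_ae ?_
    filter_upwards [enorm_ae_le_eLpNormEssSup f μ] with a ha
    simpa using mul_le_mul_left ha (g a)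
  rcases eq_or_ne q ∞ with rfl | hq
  · obtain rfl : p = 1 := (ENNReal.HolderConjugate.eq_top_iff_eq_one ∞ p).1 rfl
    rw [eLpNorm_exponent_top, eLpNorm_one_eq_lintegral_enorm, ← lintegral_mul_const'' _ hf.enorm]
    refine lintegral_mono_ae ?_
    filter_upwards [enorm_ae_le_eLpNormEssSup g μ] with a ha
    simpa using mul_le_mul_right ha (f a)
  simpa [eLpNorm_eq_lintegral_rpow_enorm_toReal (ENNReal.HolderConjugate.ne_zero p q) hp,
    eLpNorm_eq_lintegral_rpow_enorm_toReal (ENNReal.HolderConjugate.ne_zero q p) hq] using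
    ENNReal.lintegral_mul_le_Lp_mul_Lq μ (ENNReal.HolderConjugate.toReal_of_ne_top hp hq) hf hg

theorem lintegral_rpow_mul_rpow_mul_rpow_le {f g h : α → ℝ≥0∞} (hf : AEMeasurable f μ)
    (hg : AEMeasurable g μ) (hh : AEMeasurable h μ) {a b c : ℝ} (ha : 0 ≤ a) (hb : 0 ≤ b)
    (hc : 0 ≤ c) (habc : a + b + c = 1) :
    ∫⁻ x, f x ^ a * g x ^ b * h x ^ c ∂μ ≤
      (∫⁻ x, f x ∂μ) ^ a * (∫⁻ x, g x ∂μ) ^ b * (∫⁻ x, h x ∂μ) ^ c := by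
  have := ENNReal.lintegral_prod_norm_pow_le (μ := μ) Finset.univ (f := ![f, g, h])
    (p := ![a, b, c]) (by simp [Fin.forall_fin_succ, hf, hg, hh])
    (by simpa [Fin.sum_univ_three] using habc) (by simp [Fin.forall_fin_succ, ha, hb, hc])
  simpa [Fin.prod_univ_three] using this

end Holder

theorem ENNReal.young_exponents_toReal {p q r : ℝ≥0∞} (hp : p ≠ ∞) (hq : 1 ≤ q) (hr : 1 ≤ r)
    (h : 1 + 1 / p = 1 / q + 1 / r) :
    p ≠ 0 ∧ q ≠ ∞ ∧ r ≠ ∞ ∧ 1 + 1 / p.toReal = 1 / q.toReal + 1 / r.toReal := by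
  have hq1 : 1 / q ≤ 1 := by simpa using ENNReal.inv_le_one.2 hq
  have hr1 : 1 / r ≤ 1 := by simpa using ENNReal.inv_le_one.2 hr
  have hlt : 1 < 1 / q + 1 / r := h ▸ ENNReal.lt_add_right ENNReal.one_ne_top (by simpa using hp)
  have hp0 : p ≠ 0 := by
    rintro rfl
    have := h ▸ add_le_add hq1 hr1
    simp at this
  have hqt : q ≠ ∞ := by rintro rfl; simp at hlt; exact hlt.not_ge hr
  have hrt : r ≠ ∞ := by rintro rfl; simp at hlt; exact hlt.not_ge hq
  refine ⟨hp0, hqt, hrt, ?_⟩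
  have := congrArg ENNReal.toReal h
  rwa [ENNReal.toReal_add (by simp) (by simpa using hp0),
    ENNReal.toReal_add (by simpa using (zero_lt_one.trans_le hq).ne')
      (by simpa using (zero_lt_one.trans_le hr).ne'),
    ENNReal.toReal_div, ENNReal.toReal_div, ENNReal.toReal_div, ENNReal.toReal_one] at this

theorem ENNReal.rpow_mul_rpow_mul_rpow_eq_mul (u v : ℝ≥0∞) {p q r : ℝ} (hp : 0 < p)
    (hq : 1 ≤ q) (hr : 1 ≤ r) (h : 1 + 1 / p = 1 / q + 1 / r) :
    (u ^ q * v ^ r) ^ (1 / p) * (u ^ q) ^ (1 - 1 / r) * (v ^ r) ^ (1 - 1 / q) = u * v := by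
  have hp' : 0 ≤ 1 / p := by positivity
  have split (w : ℝ≥0∞) {s t : ℝ} (hs : 0 < s) (ht : 0 ≤ t) (hst : 1 / p + t = 1 / s) :
      (w ^ s) ^ (1 / p) * (w ^ s) ^ t = w := by
    rw [← ENNReal.rpow_add_of_nonneg _ _ hp' ht, hst, ← ENNReal.rpow_mul,
      mul_one_div_cancel hs.ne', ENNReal.rpow_one]
  calc (u ^ q * v ^ r) ^ (1 / p) * (u ^ q) ^ (1 - 1 / r) * (v ^ r) ^ (1 - 1 / q)
      = ((u ^ q) ^ (1 / p) * (u ^ q) ^ (1 - 1 / r)) *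
          ((v ^ r) ^ (1 / p) * (v ^ r) ^ (1 - 1 / q)) := by
        rw [ENNReal.mul_rpow_of_nonneg _ _ hp']; ring
    _ = u * v := by
        rw [split u (by linarith) (one_sub_one_div_nonneg hr) (by linarith),
          split v (by linarith) (one_sub_one_div_nonneg hq) (by linarith)]

section Convolution

variable {G : Type*} [AddGroup G] [MeasurableSpace G] [MeasurableAdd₂ G] [MeasurableNeg G]
  {μ : Measure G} [μ.IsAddLeftInvariant] {f g : G → ℝ≥0∞}

theorem lintegral_lconvolution [SFinite μ] (hf : AEMeasurable f μ) (hg : AEMeasurable g μ) :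
    ∫⁻ x, (f ⋆ₗ[μ] g) x ∂μ = (∫⁻ x, f x ∂μ) * ∫⁻ x, g x ∂μ := by
  calc ∫⁻ x, (f ⋆ₗ[μ] g) x ∂μ = ∫⁻ y, ∫⁻ x, f y * g (-y + x) ∂μ ∂μ :=
        lintegral_lintegral_swap (by fun_prop)
    _ = ∫⁻ y, f y * ∫⁻ x, g x ∂μ ∂μ := by
        congr! 2 with y
        rw [lintegral_add_left_eq_self (fun z => f y * g z) (-y), lintegral_const_mul'' _ hg]
    _ = (∫⁻ x, f x ∂μ) * ∫⁻ x, g x ∂μ := lintegral_mul_const'' _ hf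

variable [μ.IsNegInvariant]

theorem measurePreserving_neg_add (x : G) : MeasurePreserving (fun y => -y + x) μ μ := by
  have : (fun y : G => -y + x) = Neg.neg ∘ fun y => -x + y := by
    funext y; simp [neg_add_rev]
  rw [this]
  exact (Measure.measurePreserving_neg μ).comp (measurePreserving_add_left μ (-x))

theorem lintegral_neg_add_eq_self (g : G → ℝ≥0∞) (x : G) :
    ∫⁻ y, g (-y + x) ∂μ = ∫⁻ y, g y ∂μ := by
  simpa [neg_add_rev] using
    (lintegral_add_left_eq_self (fun z => g (-z)) (-x)).trans (lintegral_neg_eq_self g)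

theorem lconvolution_le_eLpNorm_mul_eLpNorm {q r : ℝ≥0∞} [q.HolderConjugate r]
    (hf : AEMeasurable f μ) (hg : AEMeasurable g μ) (x : G) :
    (f ⋆ₗ[μ] g) x ≤ eLpNorm f q μ * eLpNorm g r μ := by
  rw [← eLpNorm_comp_measurePreserving hg.aestronglyMeasurable (measurePreserving_neg_add x)]
  exact lintegral_mul_le_eLpNorm_mul_eLpNorm hf
    (hg.comp_quasiMeasurePreserving (measurePreserving_neg_add x).quasiMeasurePreserving)

theorem lconvolution_le_rpow {p q r : ℝ} (hp : 0 < p) (hq : 1 ≤ q) (hr : 1 ≤ r)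
    (h : 1 + 1 / p = 1 / q + 1 / r) (hf : AEMeasurable f μ) (hg : AEMeasurable g μ) (x : G) :
    (f ⋆ₗ[μ] g) x ≤ ((fun y => f y ^ q) ⋆ₗ[μ] fun y => g y ^ r) x ^ (1 / p) *
      (∫⁻ y, f y ^ q ∂μ) ^ (1 - 1 / r) * (∫⁻ y, g y ^ r ∂μ) ^ (1 - 1 / q) := by
  have hg' : AEMeasurable (fun y => g (-y + x)) μ :=
    hg.comp_quasiMeasurePreserving (measurePreserving_neg_add x).quasiMeasurePreserving
  calc (f ⋆ₗ[μ] g) x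
      = ∫⁻ y, (f y ^ q * g (-y + x) ^ r) ^ (1 / p) * (f y ^ q) ^ (1 - 1 / r) *
          (g (-y + x) ^ r) ^ (1 - 1 / q) ∂μ := by
        simp only [lconvolution_def, ENNReal.rpow_mul_rpow_mul_rpow_eq_mul _ _ hp hq hr h]
    _ ≤ (∫⁻ y, f y ^ q * g (-y + x) ^ r ∂μ) ^ (1 / p) * (∫⁻ y, f y ^ q ∂μ) ^ (1 - 1 / r) *
          (∫⁻ y, g (-y + x) ^ r ∂μ) ^ (1 - 1 / q) :=
        lintegral_rpow_mul_rpow_mul_rpow_le ((hf.pow_const q).mul (hg'.pow_const r))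
          (hf.pow_const q) (hg'.pow_const r) (by positivity) (one_sub_one_div_nonneg hr)
          (one_sub_one_div_nonneg hq) (by linarith)
    _ = _ := by rw [lintegral_neg_add_eq_self (fun z => g z ^ r) x, lconvolution_def]

variable [SFinite μ]

theorem lintegral_lconvolution_rpow_le {p q r : ℝ} (hp : 0 < p) (hq : 1 ≤ q) (hr : 1 ≤ r)
    (h : 1 + 1 / p = 1 / q + 1 / r) (hf : AEMeasurable f μ) (hg : AEMeasurable g μ) :
    ∫⁻ x, (f ⋆ₗ[μ] g) x ^ p ∂μ ≤ (∫⁻ y, f y ^ q ∂μ) ^ (p / q) * (∫⁻ y, g y ^ r ∂μ) ^ (p / r) := by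
  set F := ∫⁻ y, f y ^ q ∂μ
  set H := ∫⁻ y, g y ^ r ∂μ
  have hfq : AEMeasurable (fun y => f y ^ q) μ := by fun_prop
  have hgr : AEMeasurable (fun y => g y ^ r) μ := by fun_prop
  calc ∫⁻ x, (f ⋆ₗ[μ] g) x ^ p ∂μ
      ≤ ∫⁻ x, ((fun y => f y ^ q) ⋆ₗ[μ] fun y => g y ^ r) x *
          (F ^ (p * (1 - 1 / r)) * H ^ (p * (1 - 1 / q))) ∂μ := by
        refine lintegral_mono fun x => ?_
        calc (f ⋆ₗ[μ] g) x ^ p ≤ (((fun y => f y ^ q) ⋆ₗ[μ] fun y => g y ^ r) x ^ (1 / p) *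
              F ^ (1 - 1 / r) * H ^ (1 - 1 / q)) ^ p :=
              ENNReal.rpow_le_rpow (lconvolution_le_rpow hp hq hr h hf hg x) hp.le
          _ = _ := by
              rw [ENNReal.mul_rpow_of_nonneg _ _ hp.le, ENNReal.mul_rpow_of_nonneg _ _ hp.le,
                ← ENNReal.rpow_mul, ← ENNReal.rpow_mul, ← ENNReal.rpow_mul,
                one_div_mul_cancel hp.ne', ENNReal.rpow_one, mul_comm (1 - 1 / r),
                mul_comm (1 - 1 / q), mul_assoc]
    _ = F * H * (F ^ (p * (1 - 1 / r)) * H ^ (p * (1 - 1 / q))) := by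
        rw [lintegral_mul_const'' _ (aemeasurable_lconvolution hfq hgr),
          lintegral_lconvolution hfq hgr]
    _ = F ^ (p / q) * H ^ (p / r) := by
        have hpq : p / q = 1 + p * (1 - 1 / r) := by
          rw [div_eq_mul_one_div, show 1 / q = 1 + 1 / p - 1 / r by linarith]
          field_simp; ring
        have hpr : p / r = 1 + p * (1 - 1 / q) := by
          rw [div_eq_mul_one_div, show 1 / r = 1 + 1 / p - 1 / q by linarith]
          field_simp; ring
        rw [hpq, hpr, ENNReal.rpow_add_of_nonneg _ _ zero_le_one
            (mul_nonneg hp.le (one_sub_one_div_nonneg hr)),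
          ENNReal.rpow_add_of_nonneg _ _ zero_le_one
            (mul_nonneg hp.le (one_sub_one_div_nonneg hq)),
          ENNReal.rpow_one, ENNReal.rpow_one]
        ring

theorem eLpNorm_lconvolution_le {p q r : ℝ≥0∞} (hq : 1 ≤ q) (hr : 1 ≤ r)
    (h : 1 + 1 / p = 1 / q + 1 / r) (hf : AEMeasurable f μ) (hg : AEMeasurable g μ) :
    eLpNorm (f ⋆ₗ[μ] g) p μ ≤ eLpNorm f q μ * eLpNorm g r μ := by
  rcases eq_or_ne p ∞ with rfl | hp
  · have : q.HolderConjugate r := ENNReal.holderConjugate_iff.2 (by simpa using h.symm)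
    rw [eLpNorm_exponent_top]
    exact eLpNormEssSup_le_of_ae_enorm_bound
      (ae_of_all _ fun x => lconvolution_le_eLpNorm_mul_eLpNorm hf hg x)
  obtain ⟨hp0, hqt, hrt, hreal⟩ := ENNReal.young_exponents_toReal hp hq hr h
  have hq0 : q ≠ 0 := (zero_lt_one.trans_le hq).ne'
  have hr0 : r ≠ 0 := (zero_lt_one.trans_le hr).ne'
  have hP : 0 < p.toReal := ENNReal.toReal_pos hp0 hp
  have hQ : 1 ≤ q.toReal := ENNReal.toReal_mono hqt hq
  have hR : 1 ≤ r.toReal := ENNReal.toReal_mono hrt hr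
  simp only [eLpNorm_eq_lintegral_rpow_enorm_toReal hp0 hp,
    eLpNorm_eq_lintegral_rpow_enorm_toReal hq0 hqt,
    eLpNorm_eq_lintegral_rpow_enorm_toReal hr0 hrt, enorm_eq_self]
  calc (∫⁻ x, (f ⋆ₗ[μ] g) x ^ p.toReal ∂μ) ^ (1 / p.toReal)
      ≤ ((∫⁻ y, f y ^ q.toReal ∂μ) ^ (p.toReal / q.toReal) *
          (∫⁻ y, g y ^ r.toReal ∂μ) ^ (p.toReal / r.toReal)) ^ (1 / p.toReal) :=
        ENNReal.rpow_le_rpow (lintegral_lconvolution_rpow_le hP hQ hR hreal hf hg) (by positivity)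
    _ = (∫⁻ y, f y ^ q.toReal ∂μ) ^ (1 / q.toReal) *
          (∫⁻ y, g y ^ r.toReal ∂μ) ^ (1 / r.toReal) := by
        rw [ENNReal.mul_rpow_of_nonneg _ _ (by positivity), ← ENNReal.rpow_mul, ← ENNReal.rpow_mul]
        congr 2 <;> field_simp

end Convolution

theorem lconvolution_eq_add_indicator {G : Type*} [AddGroup G] [MeasurableSpace G]
    [MeasurableAdd G] [MeasurableNeg G] {μ : Measure G} {f g : G → ℝ≥0∞} (hf : Measurable f)
    (hg : Measurable g) {A : Set G} (hA : MeasurableSet A) {x : G} (hx : ∀ y ∉ A, -y + x ∈ A) :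
    (g ⋆ₗ[μ] f) x = (g ⋆ₗ[μ] A.indicator f) x + (A.indicator g ⋆ₗ[μ] Aᶜ.indicator f) x := by
  simp only [lconvolution_def]
  have hm : Measurable fun y => g y * A.indicator f (-y + x) :=
    hg.mul ((hf.indicator hA).comp (measurable_neg.add_const x))
  rw [← lintegral_add_left hm]
  refine lintegral_congr fun y => ?_
  by_cases hyx : -y + x ∈ A
  · simp [hyx]
  · have hy : y ∈ A := by_contra fun hy => hyx (hx y hy)
    simp [hyx, hy]

section NormedGroup

variable {E : Type*} [SeminormedAddCommGroup E] [MeasurableSpace E] [OpensMeasurableSpace E]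
  [MeasurableAdd₂ E] [MeasurableNeg E] {μ : Measure E} [SFinite μ] [μ.IsAddLeftInvariant]
  [μ.IsNegInvariant]

theorem eLpNorm_lconvolution_restrict_le {f g : E → ℝ≥0∞} (hf : Measurable f) (hg : Measurable g)
    (R : ℝ) {p q r q' r' : ℝ≥0∞} (hp : 1 ≤ p) (hq : 1 ≤ q) (hr : 1 ≤ r) (hq' : 1 ≤ q')
    (hr' : 1 ≤ r') (h : 1 + 1 / p = 1 / r + 1 / q) (h' : 1 + 1 / p = 1 / r' + 1 / q') :
    eLpNorm (g ⋆ₗ[μ] f) p (μ.restrict {x | R ≤ ‖x‖}) ≤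
      eLpNorm g q μ * eLpNorm f r (μ.restrict {x | R / 2 ≤ ‖x‖}) +
        eLpNorm g q' (μ.restrict {x | R / 2 ≤ ‖x‖}) * eLpNorm f r' μ := by
  set A := {x : E | R / 2 ≤ ‖x‖}
  have hA : MeasurableSet A := (isClosed_le continuous_const continuous_norm).measurableSet
  have hsplit : ∀ x ∈ {x : E | R ≤ ‖x‖},
      (g ⋆ₗ[μ] f) x = (g ⋆ₗ[μ] A.indicator f + A.indicator g ⋆ₗ[μ] Aᶜ.indicator f) x := by
    refine fun x hx => lconvolution_eq_add_indicator hf hg hA fun y hy => ?_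
    simp only [A, Set.mem_ofPred_eq, not_le, neg_add_eq_sub] at hx hy ⊢
    linarith [norm_sub_norm_le x y]
  calc eLpNorm (g ⋆ₗ[μ] f) p (μ.restrict {x | R ≤ ‖x‖})
      = eLpNorm (g ⋆ₗ[μ] A.indicator f + A.indicator g ⋆ₗ[μ] Aᶜ.indicator f) p
          (μ.restrict {x | R ≤ ‖x‖}) :=
        eLpNorm_congr_ae <| (ae_restrict_iff'
          (isClosed_le continuous_const continuous_norm).measurableSet).2 (ae_of_all _ hsplit)
    _ ≤ eLpNorm (g ⋆ₗ[μ] A.indicator f) p μ +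
          eLpNorm (A.indicator g ⋆ₗ[μ] Aᶜ.indicator f) p μ :=
        (eLpNorm_restrict_le _ _ _ _).trans (eLpNorm_add_le
          (measurable_lconvolution _ hg (hf.indicator hA)).aestronglyMeasurable
          (measurable_lconvolution _ (hg.indicator hA)
            (hf.indicator hA.compl)).aestronglyMeasurable hp)
    _ ≤ eLpNorm g q μ * eLpNorm (A.indicator f) r μ +
          eLpNorm (A.indicator g) q' μ * eLpNorm (Aᶜ.indicator f) r' μ :=
        add_le_add
          (eLpNorm_lconvolution_le hq hr (h.trans (add_comm _ _)) hg.aemeasurable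
            (hf.indicator hA).aemeasurable)
          (eLpNorm_lconvolution_le hq' hr' (h'.trans (add_comm _ _))
            (hg.indicator hA).aemeasurable (hf.indicator hA.compl).aemeasurable)
    _ ≤ eLpNorm g q μ * eLpNorm f r (μ.restrict A) +
          eLpNorm g q' (μ.restrict A) * eLpNorm f r' μ := by
        rw [eLpNorm_indicator_eq_eLpNorm_restrict hA, eLpNorm_indicator_eq_eLpNorm_restrict hA]
        gcongr
        exact eLpNorm_mono_enorm fun x => by simpa using Set.indicator_le_self _ f x

end NormedGroup

theorem enorm_integral_sub_mul_le_lconvolution {G 𝕜 : Type*} [AddCommGroup G] [MeasurableSpace G]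
    [RCLike 𝕜] {μ : Measure G} (f g : G → 𝕜) (x : G) :
    ‖∫ y, f (x - y) * g y ∂μ‖ₑ ≤ ((fun y => ‖g y‖ₑ) ⋆ₗ[μ] fun y => ‖f y‖ₑ) x := by
  simpa [lconvolution_def, enorm_mul, mul_comm, neg_add_eq_sub] using
    enorm_integral_le_lintegral_enorm (μ := μ) fun y => f (x - y) * g y

theorem stmt_0_general (R : ℝ) (p q r r' q' : ℝ≥0∞)
    (hp : 1 ≤ p) (hq : 1 ≤ q) (hr : 1 ≤ r) (hr' : 1 ≤ r') (hq' : 1 ≤ q')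
    (h1 : 1 + 1/p = 1/r + 1/q) (h2 : 1 + 1/p = 1/r' + 1/q')
    (f g : E3 → ℝ) (hf : Measurable f) (hg : Measurable g) :
    eLpNorm (fun x => ∫ y, f (x - y) * g y) p
        (volume.restrict {x : E3 | R ≤ ‖x‖}) ≤
      2 * (eLpNorm f r (volume.restrict {x : E3 | R / 2 ≤ ‖x‖}) * eLpNorm g q volume
        + eLpNorm f r' volume * eLpNorm g q' (volume.restrict {x : E3 | R / 2 ≤ ‖x‖})) := by
  calc eLpNorm (fun x => ∫ y, f (x - y) * g y) p (volume.restrict {x : E3 | R ≤ ‖x‖})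
      ≤ eLpNorm ((fun y => ‖g y‖ₑ) ⋆ₗ fun y => ‖f y‖ₑ) p
          (volume.restrict {x : E3 | R ≤ ‖x‖}) :=
        eLpNorm_mono_enorm fun x => by simpa using enorm_integral_sub_mul_le_lconvolution f g x
    _ ≤ eLpNorm g q volume * eLpNorm f r (volume.restrict {x : E3 | R / 2 ≤ ‖x‖}) +
          eLpNorm g q' (volume.restrict {x : E3 | R / 2 ≤ ‖x‖}) * eLpNorm f r' volume := by
        simpa only [eLpNorm_enorm] using
          eLpNorm_lconvolution_restrict_le hf.enorm hg.enorm R hp hq hr hq' hr' h1 h2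
    _ ≤ 2 * (eLpNorm f r (volume.restrict {x : E3 | R / 2 ≤ ‖x‖}) * eLpNorm g q volume
          + eLpNorm f r' volume * eLpNorm g q' (volume.restrict {x : E3 | R / 2 ≤ ‖x‖})) := by
        rw [mul_comm (eLpNorm g q _), mul_comm (eLpNorm g q' _)]
        exact le_mul_of_one_le_left zero_le one_le_two

theorem stmt_0 (R : ℝ) (hR : 0 ≤ R) (p q r r' q' : ℝ≥0∞)
    (hp : 1 ≤ p) (hq : 1 ≤ q) (hr : 1 ≤ r) (hr' : 1 ≤ r') (hq' : 1 ≤ q')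
    (h1 : 1 + 1/p = 1/r + 1/q) (h2 : 1 + 1/p = 1/r' + 1/q')
    (f g : E3 → ℝ) (hf : Measurable f) (hg : Measurable g) :
    eLpNorm (fun x => ∫ y, f (x - y) * g y) p
        (volume.restrict {x : E3 | R ≤ ‖x‖}) ≤
      2 * (eLpNorm f r (volume.restrict {x : E3 | R / 2 ≤ ‖x‖}) * eLpNorm g q volume
        + eLpNorm f r' volume * eLpNorm g q' (volume.restrict {x : E3 | R / 2 ≤ ‖x‖})) :=
  stmt_0_general R p q r r' q' hp hq hr hr' hq' h1 h2 f g hf hg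
end
end

section
/- Let f ∈ L¹(ℝⁿ) and define V(x) = −x ∫₀¹ f(x/λ) λ^{−(n+1)} dλ. Then V is locally integrable on ℝⁿ, and in the sense of distributions one has f = (∫ f) δ₀ + div V, where δ₀ is the Dirac mass at the origin. -/
open MeasureTheory Filter
open scoped ENNReal RealInnerProductSpace

noncomputable section

/-- The Duoandikoetxea–Zuazua vector field `V(x) = -x ∫₀¹ f(x/λ) λ^{-(n+1)} dλ`. -/
def DZfield (n : ℕ) (f : EuclideanSpace ℝ (Fin n) → ℝ) (x : EuclideanSpace ℝ (Fin n)) :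
    EuclideanSpace ℝ (Fin n) :=
  -(∫ l in Set.Ioo (0 : ℝ) 1, f (l⁻¹ • x) / l ^ (n + 1)) • x

variable {n : ℕ}

local notation "E" => EuclideanSpace ℝ (Fin n)

lemma DZ.lintegral_comp_inv_smul (g : EuclideanSpace ℝ (Fin n) → ℝ≥0∞) {l : ℝ} (hl : 0 < l) :
    ∫⁻ x, g (l⁻¹ • x) = ENNReal.ofReal (l ^ n) * ∫⁻ y, g y := by
  have hne : (l : ℝ)⁻¹ ≠ 0 := inv_ne_zero hl.ne'
  have hmap := Measure.map_addHaar_smul (volume : Measure E) hne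
  have he : ∫⁻ x, g (l⁻¹ • x) =
      ∫⁻ y, g y ∂(Measure.map (fun x : E => l⁻¹ • x) volume) := by
    rw [show (fun x : E => l⁻¹ • x) =
        ((Homeomorph.smul (isUnit_iff_ne_zero.2 hne).unit).toMeasurableEquiv : E → E) from rfl,
      MeasureTheory.lintegral_map_equiv]
    rfl
  rw [he, hmap, lintegral_smul_measure]
  congr 1
  rw [inv_pow, inv_inv, finrank_euclideanSpace_fin, abs_of_nonneg (pow_nonneg hl.le _)]

lemma DZ.aesm_key {f : EuclideanSpace ℝ (Fin n) → ℝ} (hf : AEStronglyMeasurable f volume) :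
    AEStronglyMeasurable (fun p : ℝ × EuclideanSpace ℝ (Fin n) => f (p.1⁻¹ • p.2))
      ((volume : Measure ℝ).prod (volume : Measure E)) := by
  obtain ⟨g, hg, hfg⟩ := hf
  refine ⟨fun p => g (p.1⁻¹ • p.2),
    hg.comp_measurable (measurable_fst.inv.smul measurable_snd), ?_⟩
  obtain ⟨N, hNsub, hNmeas, hNnull⟩ := exists_measurable_superset_of_null hfg
  have hS : ((volume : Measure ℝ).prod (volume : Measure E))
      ((fun p : ℝ × E => p.1⁻¹ • p.2) ⁻¹' N) = 0 := by
    rw [Measure.measure_prod_null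
      ((show Measurable (fun p : ℝ × E => p.1⁻¹ • p.2) from
        measurable_fst.inv.smul measurable_snd) hNmeas)]
    filter_upwards [compl_mem_ae_iff.2 (measure_singleton (0:ℝ))] with l hl
    have hl' : l ≠ 0 := hl
    simp only [Pi.zero_apply]
    have : (Prod.mk l ⁻¹' ((fun p : ℝ × E => p.1⁻¹ • p.2) ⁻¹' N)) = (fun x : E => l⁻¹ • x) ⁻¹' N := rfl
    rw [this, Measure.addHaar_preimage_smul (volume : Measure E) (inv_ne_zero hl'), hNnull,
      mul_zero]
  refine (measure_mono_null ?_ hS : _)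
  intro p hp
  exact hNsub hp

lemma DZ.boundB {g : ℝ → ℝ≥0∞} {ny C R : ℝ} (hC : 0 ≤ C) (hR : 0 < R) (hny : 0 ≤ ny)
    (hg : ∀ l ∈ Set.Ioo (0:ℝ) 1, g l ≤ ENNReal.ofReal (C * ny))
    (hg0 : ∀ l ∈ Set.Ioo (0:ℝ) 1, R < l * ny → g l = 0) :
    ∫⁻ l in Set.Ioo (0:ℝ) 1, g l ≤ ENNReal.ofReal (C * R) := by
  rcases le_or_gt ny R with hyR | hyR
  · calc ∫⁻ l in Set.Ioo (0:ℝ) 1, g l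
        ≤ ∫⁻ _ in Set.Ioo (0:ℝ) 1, ENNReal.ofReal (C * ny) :=
          setLIntegral_mono' measurableSet_Ioo hg
      _ = ENNReal.ofReal (C * ny) * volume (Set.Ioo (0:ℝ) 1) := by
          rw [setLIntegral_const]
      _ ≤ ENNReal.ofReal (C * R) := by
          rw [Real.volume_Ioo]
          simp only [sub_zero, ENNReal.ofReal_one, mul_one]
          exact ENNReal.ofReal_le_ofReal (mul_le_mul_of_nonneg_left hyR hC)
  · have hny0 : 0 < ny := lt_trans hR hyR
    have key : ∀ l ∈ Set.Ioo (0:ℝ) 1, g l ≤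
        (Set.Iic (R / ny)).indicator (fun _ => ENNReal.ofReal (C * ny)) l := by
      intro l hl
      by_cases hle : l ≤ R / ny
      · rw [Set.indicator_of_mem (Set.mem_Iic.2 hle)]; exact hg l hl
      · rw [Set.indicator_of_notMem (by simpa using hle)]
        have : R < l * ny := by
          rw [not_le, div_lt_iff₀ hny0] at hle; linarith [hle]
        rw [hg0 l hl this]
    calc ∫⁻ l in Set.Ioo (0:ℝ) 1, g l
        ≤ ∫⁻ l in Set.Ioo (0:ℝ) 1,
            (Set.Iic (R / ny)).indicator (fun _ => ENNReal.ofReal (C * ny)) l :=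
          setLIntegral_mono' measurableSet_Ioo key
      _ = ENNReal.ofReal (C * ny) * (volume.restrict (Set.Ioo (0:ℝ) 1)) (Set.Iic (R / ny)) := by
          rw [lintegral_indicator measurableSet_Iic, setLIntegral_const]
      _ ≤ ENNReal.ofReal (C * ny) * ENNReal.ofReal (R / ny) := by
          gcongr
          rw [Measure.restrict_apply measurableSet_Iic]
          calc volume (Set.Iic (R / ny) ∩ Set.Ioo 0 1)
              ≤ volume (Set.Ioc (0:ℝ) (R / ny)) := by
                apply measure_mono
                rintro l ⟨hl1, hl2⟩
                exact Set.mem_Ioc.2 ⟨hl2.1, hl1⟩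
            _ = ENNReal.ofReal (R / ny) := by rw [Real.volume_Ioc, sub_zero]
      _ = ENNReal.ofReal (C * R) := by
          rw [← ENNReal.ofReal_mul (by positivity)]
          congr 1
          field_simp

lemma DZ.masterFIN {f : EuclideanSpace ℝ (Fin n) → ℝ} (hf : Integrable f volume)
    {w : ℝ → EuclideanSpace ℝ (Fin n) → ℝ≥0∞} {C R : ℝ} (hC : 0 ≤ C) (hR : 0 < R)
    (hwm : AEMeasurable (fun p : ℝ × E => w p.1 p.2)
        ((volume.restrict (Set.Ioo (0:ℝ) 1)).prod volume))
    (hw : ∀ l ∈ Set.Ioo (0:ℝ) 1, ∀ y : E, w l y ≤ ENNReal.ofReal (C * ‖y‖))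
    (hw0 : ∀ l ∈ Set.Ioo (0:ℝ) 1, ∀ y : E, R < l * ‖y‖ → w l y = 0) :
    ∫⁻ l in Set.Ioo (0:ℝ) 1, ∫⁻ y, (‖f y‖₊ : ℝ≥0∞) * w l y < ⊤ := by
  have hswap : ∫⁻ l in Set.Ioo (0:ℝ) 1, ∫⁻ y, (‖f y‖₊ : ℝ≥0∞) * w l y
      = ∫⁻ y, ∫⁻ l in Set.Ioo (0:ℝ) 1, (‖f y‖₊ : ℝ≥0∞) * w l y := by
    refine lintegral_lintegral_swap ?_
    exact (hf.aestronglyMeasurable.enorm.comp_quasiMeasurePreserving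
      Measure.quasiMeasurePreserving_snd).mul hwm
  rw [hswap]
  calc ∫⁻ y : E, ∫⁻ l in Set.Ioo (0:ℝ) 1, (‖f y‖₊ : ℝ≥0∞) * w l y
      ≤ ∫⁻ y : E, (‖f y‖₊ : ℝ≥0∞) * ENNReal.ofReal (C * R) := by
        refine lintegral_mono fun y => ?_
        rw [lintegral_const_mul' _ _ ENNReal.coe_ne_top]
        exact mul_le_mul_right (DZ.boundB hC hR (norm_nonneg y)
          (fun l hl => hw l hl y) (fun l hl h => hw0 l hl y h)) _
    _ = (∫⁻ y : E, (‖f y‖₊ : ℝ≥0∞)) * ENNReal.ofReal (C * R) := by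
        rw [lintegral_mul_const' _ _ ENNReal.ofReal_ne_top]
    _ < ⊤ := ENNReal.mul_lt_top hf.2 ENNReal.ofReal_lt_top

lemma DZ.inner_gradient {φ : EuclideanSpace ℝ (Fin n) → ℝ} (z y : E) :
    ⟪y, gradient φ z⟫ = fderiv ℝ φ z y := by
  rw [real_inner_comm]
  show ⟪(InnerProductSpace.toDual ℝ E).symm (fderiv ℝ φ z), y⟫ = fderiv ℝ φ z y
  rw [← InnerProductSpace.toDual_apply_apply, LinearIsometryEquiv.apply_symm_apply]

lemma DZ.gradient_continuous {φ : EuclideanSpace ℝ (Fin n) → ℝ} (hφ : ContDiff ℝ (⊤ : ℕ∞) φ) :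
    Continuous (gradient φ) :=
  (InnerProductSpace.toDual ℝ E).symm.continuous.comp (hφ.continuous_fderiv (by simp))

lemma DZ.gradient_compact_support {φ : EuclideanSpace ℝ (Fin n) → ℝ}
    (hφs : HasCompactSupport φ) : HasCompactSupport (gradient φ) := by
  exact (hφs.fderiv ℝ).comp_left (g := (InnerProductSpace.toDual ℝ E).symm) (map_zero _)

lemma DZ.ftc {φ : EuclideanSpace ℝ (Fin n) → ℝ} (hφ : ContDiff ℝ (⊤ : ℕ∞) φ) (y : E) :
    ∫ l in Set.Ioo (0:ℝ) 1, ⟪y, gradient φ (l • y)⟫ = φ y - φ 0 := by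
  have hderiv : ∀ t : ℝ, HasDerivAt (fun l : ℝ => φ (l • y)) ⟪y, gradient φ (t • y)⟫ t := by
    intro t
    have hd : HasFDerivAt φ (fderiv ℝ φ (t • y)) (t • y) :=
      (hφ.differentiable (by simp) (t • y)).hasFDerivAt
    have hs : HasDerivAt (fun l : ℝ => l • y) y t := by
      simpa using (hasDerivAt_id t).smul_const y
    have := hd.comp_hasDerivAt t hs
    rw [DZ.inner_gradient]
    exact this
  have hcont : Continuous fun t : ℝ => ⟪y, gradient φ (t • y)⟫ :=
    continuous_const.inner ((DZ.gradient_continuous hφ).comp (continuous_id.smul continuous_const))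
  have := intervalIntegral.integral_eq_sub_of_hasDerivAt
    (fun t _ => hderiv t) (hcont.intervalIntegrable 0 1)
  rw [← integral_Ioc_eq_integral_Ioo, ← intervalIntegral.integral_of_le zero_le_one, this,
    one_smul, zero_smul]

lemma DZ.stepL {f φ : EuclideanSpace ℝ (Fin n) → ℝ} {l : ℝ} (hl : l ∈ Set.Ioo (0:ℝ) 1) :
    ∫⁻ x : E, (‖f (l⁻¹ • x) / l ^ (n+1) * ⟪x, gradient φ x⟫‖₊ : ℝ≥0∞)
      = ∫⁻ y : E, (‖f y * ⟪y, gradient φ (l • y)⟫‖₊ : ℝ≥0∞) := by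
  obtain ⟨hl0, hl1⟩ := hl
  set g : E → ℝ≥0∞ := fun y => (‖f y / l^(n+1) * ⟪l • y, gradient φ (l • y)⟫‖₊ : ℝ≥0∞) with hg
  have h1 : ∀ x : E, (‖f (l⁻¹ • x) / l ^ (n+1) * ⟪x, gradient φ x⟫‖₊ : ℝ≥0∞) = g (l⁻¹ • x) := by
    intro x; simp only [hg, smul_inv_smul₀ hl0.ne']
  simp_rw [h1]
  rw [DZ.lintegral_comp_inv_smul g hl0]
  have h2 : ∀ y : E, g y
      = ENNReal.ofReal (l / l^(n+1)) * (‖f y * ⟪y, gradient φ (l • y)⟫‖₊ : ℝ≥0∞) := by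
    intro y
    have hr : f y / l^(n+1) * ⟪l • y, gradient φ (l • y)⟫
        = (l / l^(n+1)) * (f y * ⟪y, gradient φ (l • y)⟫) := by
      rw [real_inner_smul_left]; ring
    rw [hg]
    simp only []
    rw [hr, nnnorm_mul, ENNReal.coe_mul, (show (‖(_:ℝ)‖₊ : ℝ≥0∞) = _ from Real.enorm_eq_ofReal (by positivity))]
  simp_rw [h2]
  rw [lintegral_const_mul' _ _ ENNReal.ofReal_ne_top, ← mul_assoc,
    ← ENNReal.ofReal_mul (by positivity)]
  have h3 : l^n * (l / l^(n+1)) = 1 := by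
    field_simp [pow_succ]
    ring
  rw [h3, ENNReal.ofReal_one, one_mul]

lemma DZ.step {f φ : EuclideanSpace ℝ (Fin n) → ℝ} {l : ℝ} (hl : l ∈ Set.Ioo (0:ℝ) 1) :
    ∫ x : E, f (l⁻¹ • x) / l ^ (n+1) * ⟪x, gradient φ x⟫
      = ∫ y : E, f y * ⟪y, gradient φ (l • y)⟫ := by
  obtain ⟨hl0, hl1⟩ := hl
  set G : E → ℝ := fun y => f y / l^(n+1) * ⟪l • y, gradient φ (l • y)⟫ with hG
  have h1 : ∀ x : E, f (l⁻¹ • x) / l ^ (n+1) * ⟪x, gradient φ x⟫ = G (l⁻¹ • x) := by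
    intro x; simp only [hG, smul_inv_smul₀ hl0.ne']
  simp_rw [h1]
  rw [Measure.integral_comp_inv_smul_of_nonneg volume G hl0.le,
    finrank_euclideanSpace_fin, ← integral_smul]
  refine integral_congr_ae (Eventually.of_forall fun y => ?_)
  simp only [hG, smul_eq_mul, real_inner_smul_left]
  field_simp [pow_succ]
  ring

lemma DZ.prod_restrict_eq₁ :
    ((volume : Measure ℝ).restrict (Set.Ioo (0:ℝ) 1)).prod (volume : Measure E)
      = ((volume : Measure ℝ).prod (volume : Measure E)).restrict
          ((Set.Ioo (0:ℝ) 1) ×ˢ (Set.univ : Set E)) := by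
  rw [← Measure.prod_restrict, Measure.restrict_univ]

lemma DZ.aesm_key₂ {f : EuclideanSpace ℝ (Fin n) → ℝ} (hf : AEStronglyMeasurable f volume) :
    AEStronglyMeasurable (fun p : EuclideanSpace ℝ (Fin n) × ℝ => f (p.2⁻¹ • p.1))
      ((volume : Measure E).prod (volume : Measure ℝ)) :=
  MeasureTheory.AEStronglyMeasurable.prod_swap (DZ.aesm_key hf)

lemma DZ.locInt {f : EuclideanSpace ℝ (Fin n) → ℝ} (hf : Integrable f volume) :
    LocallyIntegrable (DZfield n f) volume := by
  -- a.e. strong measurability of the field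
  have hdiv : AEStronglyMeasurable
      (fun p : E × ℝ => f (p.2⁻¹ • p.1) / p.2 ^ (n + 1))
      ((volume : Measure E).prod (volume : Measure ℝ)) :=
by
    simp only [div_eq_mul_inv]
    exact (DZ.aesm_key₂ hf.aestronglyMeasurable).mul
      ((measurable_snd.pow_const (n+1)).inv.aestronglyMeasurable)
  have hmeq : ((volume : Measure E).prod ((volume : Measure ℝ).restrict (Set.Ioo (0:ℝ) 1)))
      = ((volume : Measure E).prod (volume : Measure ℝ)).restrict
          ((Set.univ : Set E) ×ˢ (Set.Ioo (0:ℝ) 1)) := by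
    rw [← Measure.prod_restrict, Measure.restrict_univ]
  have hdivr : AEStronglyMeasurable
      (fun p : E × ℝ => f (p.2⁻¹ • p.1) / p.2 ^ (n + 1))
      ((volume : Measure E).prod ((volume : Measure ℝ).restrict (Set.Ioo (0:ℝ) 1))) := by
    rw [hmeq]; exact hdiv.restrict
  have hc : AEStronglyMeasurable
      (fun x : E => ∫ l in Set.Ioo (0:ℝ) 1, f (l⁻¹ • x) / l ^ (n + 1)) volume :=
    hdivr.integral_prod_right'
  have haesm : AEStronglyMeasurable (DZfield n f) volume := by
    exact (hc.neg.smul aestronglyMeasurable_id : _)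
  rw [locallyIntegrable_iff]
  intro k hk
  obtain ⟨R, hR, hkR⟩ := hk.isBounded.subset_closedBall_lt 0 0
  refine IntegrableOn.mono_set ?_ hkR
  set B := Metric.closedBall (0 : E) R with hB
  have hBmeas : MeasurableSet B := measurableSet_closedBall
  refine ⟨haesm.restrict, ?_⟩
  -- pointwise bound
  have hpt : ∀ x : E, (‖DZfield n f x‖₊ : ℝ≥0∞)
      ≤ ∫⁻ l in Set.Ioo (0:ℝ) 1, (‖f (l⁻¹ • x) / l ^ (n+1)‖₊ : ℝ≥0∞) * ‖x‖₊ := by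
    intro x
    rw [show DZfield n f x
      = (-(∫ l in Set.Ioo (0 : ℝ) 1, f (l⁻¹ • x) / l ^ (n + 1))) • x from rfl,
      nnnorm_smul, ENNReal.coe_mul, nnnorm_neg,
      lintegral_mul_const' _ _ ENNReal.coe_ne_top]
    exact mul_le_mul_left (enorm_integral_le_lintegral_enorm _) _
  set w : ℝ → E → ℝ≥0∞ :=
    fun l y => (‖y‖₊ : ℝ≥0∞) * B.indicator (fun _ => (1:ℝ≥0∞)) (l • y) with hwdef
  have hwm : AEMeasurable (fun p : ℝ × E => w p.1 p.2)
      ((volume.restrict (Set.Ioo (0:ℝ) 1)).prod volume) := by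
    refine Measurable.aemeasurable ?_
    refine (measurable_snd.nnnorm.coe_nnreal_ennreal).mul ?_
    have he : (fun p : ℝ × E => B.indicator (fun _ => (1:ℝ≥0∞)) (p.1 • p.2))
        = ((fun p : ℝ × E => p.1 • p.2) ⁻¹' B).indicator (fun _ => (1:ℝ≥0∞)) := by
      funext p
      by_cases h : p.1 • p.2 ∈ B
      · rw [Set.indicator_of_mem h]
        exact (Set.indicator_of_mem (s := (fun p : ℝ × E => p.1 • p.2) ⁻¹' B)
          (f := fun _ => (1:ℝ≥0∞)) h).symm
      · rw [Set.indicator_of_notMem h]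
        exact (Set.indicator_of_notMem (s := (fun p : ℝ × E => p.1 • p.2) ⁻¹' B)
          (f := fun _ => (1:ℝ≥0∞)) h).symm
    rw [he]
    exact measurable_const.indicator ((measurable_fst.smul measurable_snd) hBmeas)
  have hw : ∀ l ∈ Set.Ioo (0:ℝ) 1, ∀ y : E, w l y ≤ ENNReal.ofReal (1 * ‖y‖) := by
    intro l _ y
    simp only [hwdef, one_mul]
    by_cases h : l • y ∈ B
    · rw [Set.indicator_of_mem h, mul_one, ← enorm_eq_nnnorm, ← ofReal_norm]
    · rw [Set.indicator_of_notMem h, mul_zero]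
      exact bot_le
  have hw0 : ∀ l ∈ Set.Ioo (0:ℝ) 1, ∀ y : E, R < l * ‖y‖ → w l y = 0 := by
    intro l hl y hy
    have hnot : l • y ∉ B := by
      rw [hB, Metric.mem_closedBall, dist_zero_right, norm_smul,
        Real.norm_eq_abs, abs_of_pos hl.1]
      exact not_le.2 hy
    simp only [hwdef, Set.indicator_of_notMem hnot, mul_zero]
  have hFIN := DZ.masterFIN hf zero_le_one hR hwm hw hw0
  have hu : AEMeasurable
      (fun p : E × ℝ => (‖f (p.2⁻¹ • p.1) / p.2 ^ (n+1)‖₊ : ℝ≥0∞) * ‖p.1‖₊)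
      ((volume.restrict B).prod (volume.restrict (Set.Ioo (0:ℝ) 1))) := by
    have h0 := hdiv.enorm.mul (measurable_fst.nnnorm.coe_nnreal_ennreal).aemeasurable
    rw [Measure.prod_restrict]
    exact h0.restrict
  have hswap : ∫⁻ x in B, ∫⁻ l in Set.Ioo (0:ℝ) 1,
        (‖f (l⁻¹ • x) / l ^ (n+1)‖₊ : ℝ≥0∞) * ‖x‖₊
      = ∫⁻ l in Set.Ioo (0:ℝ) 1, ∫⁻ x in B,
        (‖f (l⁻¹ • x) / l ^ (n+1)‖₊ : ℝ≥0∞) * ‖x‖₊ :=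
    lintegral_lintegral_swap hu
  have hinner : ∀ l ∈ Set.Ioo (0:ℝ) 1,
      ∫⁻ x in B, (‖f (l⁻¹ • x) / l ^ (n+1)‖₊ : ℝ≥0∞) * ‖x‖₊
        = ∫⁻ y, (‖f y‖₊ : ℝ≥0∞) * w l y := by
    intro l hl
    obtain ⟨hl0, hl1⟩ := hl
    set g : E → ℝ≥0∞ := fun y =>
      (‖f y / l ^ (n+1)‖₊ : ℝ≥0∞) *
        ((‖l • y‖₊ : ℝ≥0∞) * B.indicator (fun _ => (1:ℝ≥0∞)) (l • y)) with hg
    have e1 : ∫⁻ x in B, (‖f (l⁻¹ • x) / l ^ (n+1)‖₊ : ℝ≥0∞) * ‖x‖₊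
        = ∫⁻ x, g (l⁻¹ • x) := by
      rw [← lintegral_indicator hBmeas]
      refine lintegral_congr fun x => ?_
      simp only [hg, smul_inv_smul₀ hl0.ne']
      by_cases h : x ∈ B
      · rw [Set.indicator_of_mem h, Set.indicator_of_mem h]; ring
      · rw [Set.indicator_of_notMem h, Set.indicator_of_notMem h]; ring
    rw [e1, DZ.lintegral_comp_inv_smul g hl0]
    have e2 : ∀ y : E, g y
        = ENNReal.ofReal (1 / l^(n+1) * l) * ((‖f y‖₊ : ℝ≥0∞) * w l y) := by
      intro y
      simp only [hg, hwdef]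
      have hd : f y / l ^ (n+1) = (1 / l^(n+1)) * f y := by ring
      rw [hd, nnnorm_mul, ENNReal.coe_mul, (show (‖(_:ℝ)‖₊ : ℝ≥0∞) = _ from Real.enorm_eq_ofReal (by positivity)),
        nnnorm_smul, ENNReal.coe_mul, (show (‖(_:ℝ)‖₊ : ℝ≥0∞) = _ from Real.enorm_eq_ofReal hl0.le),
        ENNReal.ofReal_mul (by positivity)]
      ring
    simp_rw [e2]
    rw [lintegral_const_mul' _ _ ENNReal.ofReal_ne_top, ← mul_assoc,
      ← ENNReal.ofReal_mul (by positivity)]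
    have h1 : l ^ n * (1 / l^(n+1) * l) = 1 := by field_simp [pow_succ]; ring
    rw [h1, ENNReal.ofReal_one, one_mul]
  show (∫⁻ x, (‖DZfield n f x‖₊ : ℝ≥0∞) ∂volume.restrict B) < ⊤
  calc ∫⁻ x in B, (‖DZfield n f x‖₊ : ℝ≥0∞)
      ≤ ∫⁻ x in B, ∫⁻ l in Set.Ioo (0:ℝ) 1,
          (‖f (l⁻¹ • x) / l ^ (n+1)‖₊ : ℝ≥0∞) * ‖x‖₊ := lintegral_mono fun x => hpt x
    _ = ∫⁻ l in Set.Ioo (0:ℝ) 1, ∫⁻ x in B,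
          (‖f (l⁻¹ • x) / l ^ (n+1)‖₊ : ℝ≥0∞) * ‖x‖₊ := hswap
    _ = ∫⁻ l in Set.Ioo (0:ℝ) 1, ∫⁻ y, (‖f y‖₊ : ℝ≥0∞) * w l y :=
        setLIntegral_congr_fun_ae measurableSet_Ioo (ae_of_all _ hinner)
    _ < ⊤ := hFIN

lemma DZ.part2 {f : EuclideanSpace ℝ (Fin n) → ℝ} (hf : Integrable f volume)
    {φ : EuclideanSpace ℝ (Fin n) → ℝ} (hφ : ContDiff ℝ (⊤ : ℕ∞) φ) (hφs : HasCompactSupport φ) :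
    ∫ x, f x * φ x = (∫ x, f x) * φ 0 - ∫ x : E, ⟪DZfield n f x, gradient φ x⟫ := by
  have hgc : Continuous (gradient φ) := DZ.gradient_continuous hφ
  have hgs : HasCompactSupport (gradient φ) := DZ.gradient_compact_support hφs
  obtain ⟨C, hC⟩ := hgs.exists_bound_of_continuous hgc
  have hC0 : 0 ≤ C := le_trans (norm_nonneg _) (hC 0)
  obtain ⟨R, hR, hsub⟩ := hgs.isCompact.isBounded.subset_closedBall_lt 0 0
  set w : ℝ → E → ℝ≥0∞ := fun l y => (‖⟪y, gradient φ (l • y)⟫‖₊ : ℝ≥0∞) with hwdef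
  have hwcont : Continuous fun p : ℝ × E => ⟪p.2, gradient φ (p.1 • p.2)⟫ :=
    continuous_snd.inner (hgc.comp (continuous_fst.smul continuous_snd))
  have hwm : AEMeasurable (fun p : ℝ × E => w p.1 p.2)
      ((volume.restrict (Set.Ioo (0:ℝ) 1)).prod volume) :=
    (hwcont.nnnorm.measurable.coe_nnreal_ennreal).aemeasurable
  have hw : ∀ l ∈ Set.Ioo (0:ℝ) 1, ∀ y : E, w l y ≤ ENNReal.ofReal (C * ‖y‖) := by
    intro l _ y
    simp only [hwdef]
    rw [← enorm_eq_nnnorm, ← ofReal_norm]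
    refine ENNReal.ofReal_le_ofReal ?_
    calc ‖⟪y, gradient φ (l • y)⟫‖ ≤ ‖y‖ * ‖gradient φ (l • y)‖ := norm_inner_le_norm _ _
      _ ≤ ‖y‖ * C := mul_le_mul_of_nonneg_left (hC _) (norm_nonneg y)
      _ = C * ‖y‖ := mul_comm _ _
  have hw0 : ∀ l ∈ Set.Ioo (0:ℝ) 1, ∀ y : E, R < l * ‖y‖ → w l y = 0 := by
    intro l hl y hy
    have hnot : l • y ∉ tsupport (gradient φ) := by
      intro hmem
      have := hsub hmem
      rw [Metric.mem_closedBall, dist_zero_right, norm_smul, Real.norm_eq_abs,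
        abs_of_pos hl.1] at this
      exact absurd this (not_le.2 hy)
    have h0 : gradient φ (l • y) = 0 := image_eq_zero_of_notMem_tsupport hnot
    simp only [hwdef, h0, inner_zero_right, nnnorm_zero, ENNReal.coe_zero]
  have hFIN := DZ.masterFIN hf hC0 hR hwm hw hw0
  -- Integrability of the two double integrands
  have haesmJ : AEStronglyMeasurable (fun p : ℝ × E => f p.2 * ⟪p.2, gradient φ (p.1 • p.2)⟫)
      ((volume.restrict (Set.Ioo (0:ℝ) 1)).prod volume) :=
    hf.aestronglyMeasurable.comp_snd.mul hwcont.aestronglyMeasurable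
  have hJint : Integrable (fun p : ℝ × E => f p.2 * ⟪p.2, gradient φ (p.1 • p.2)⟫)
      ((volume.restrict (Set.Ioo (0:ℝ) 1)).prod volume) := by
    refine ⟨haesmJ, ?_⟩
    show (∫⁻ p, (‖f p.2 * ⟪p.2, gradient φ (p.1 • p.2)⟫‖₊ : ℝ≥0∞)
      ∂((volume.restrict (Set.Ioo (0:ℝ) 1)).prod volume)) < ⊤
    rw [MeasureTheory.lintegral_prod
      (fun p : ℝ × E => (‖f p.2 * ⟪p.2, gradient φ (p.1 • p.2)⟫‖₊ : ℝ≥0∞)) haesmJ.enorm]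
    have : ∀ l : ℝ, ∀ y : E, (‖f y * ⟪y, gradient φ (l • y)⟫‖₊ : ℝ≥0∞)
        = (‖f y‖₊ : ℝ≥0∞) * w l y := by
      intro l y; rw [hwdef, nnnorm_mul, ENNReal.coe_mul]
    simp_rw [this]
    exact hFIN
  have haesmH : AEStronglyMeasurable
      (fun p : ℝ × E => f (p.1⁻¹ • p.2) / p.1 ^ (n + 1) * ⟪p.2, gradient φ p.2⟫)
      ((volume.restrict (Set.Ioo (0:ℝ) 1)).prod volume) := by
    have h1 : AEStronglyMeasurable (fun p : ℝ × E => f (p.1⁻¹ • p.2))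
        ((volume.restrict (Set.Ioo (0:ℝ) 1)).prod volume) := by
      rw [DZ.prod_restrict_eq₁]
      exact (DZ.aesm_key hf.aestronglyMeasurable).restrict
    have h2 : AEStronglyMeasurable (fun p : ℝ × E => f (p.1⁻¹ • p.2) / p.1 ^ (n + 1))
        ((volume.restrict (Set.Ioo (0:ℝ) 1)).prod volume) := by
      simp only [div_eq_mul_inv]
      exact h1.mul ((measurable_fst.pow_const (n+1)).inv.aestronglyMeasurable)
    exact h2.mul (continuous_id.inner (hgc.comp continuous_id)).aestronglyMeasurable.comp_snd
  have hHint : Integrable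
      (fun p : ℝ × E => f (p.1⁻¹ • p.2) / p.1 ^ (n + 1) * ⟪p.2, gradient φ p.2⟫)
      ((volume.restrict (Set.Ioo (0:ℝ) 1)).prod volume) := by
    refine ⟨haesmH, ?_⟩
    show (∫⁻ p, (‖f (p.1⁻¹ • p.2) / p.1 ^ (n + 1) * ⟪p.2, gradient φ p.2⟫‖₊ : ℝ≥0∞)
      ∂((volume.restrict (Set.Ioo (0:ℝ) 1)).prod volume)) < ⊤
    rw [MeasureTheory.lintegral_prod
      (fun p : ℝ × E => (‖f (p.1⁻¹ • p.2) / p.1 ^ (n + 1) * ⟪p.2, gradient φ p.2⟫‖₊ : ℝ≥0∞))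
      haesmH.enorm]
    have heq : ∀ l ∈ Set.Ioo (0:ℝ) 1,
        ∫⁻ x : E, (‖f (l⁻¹ • x) / l ^ (n + 1) * ⟪x, gradient φ x⟫‖₊ : ℝ≥0∞)
          = ∫⁻ y, (‖f y‖₊ : ℝ≥0∞) * w l y := by
      intro l hl
      rw [DZ.stepL hl]
      refine lintegral_congr fun y => ?_
      rw [hwdef, nnnorm_mul, ENNReal.coe_mul]
    calc ∫⁻ l in Set.Ioo (0:ℝ) 1,
          ∫⁻ x : E, (‖f (l⁻¹ • x) / l ^ (n + 1) * ⟪x, gradient φ x⟫‖₊ : ℝ≥0∞)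
        = ∫⁻ l in Set.Ioo (0:ℝ) 1, ∫⁻ y, (‖f y‖₊ : ℝ≥0∞) * w l y :=
          setLIntegral_congr_fun_ae measurableSet_Ioo (ae_of_all _ heq)
      _ < ⊤ := hFIN
  -- main computation
  have h1 : ∫ x : E, ⟪DZfield n f x, gradient φ x⟫
      = -∫ x : E, ∫ l in Set.Ioo (0:ℝ) 1,
          f (l⁻¹ • x) / l ^ (n + 1) * ⟪x, gradient φ x⟫ := by
    rw [← integral_neg]
    refine integral_congr_ae (Eventually.of_forall fun x => ?_)
    show ⟪DZfield n f x, gradient φ x⟫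
      = -∫ l in Set.Ioo (0:ℝ) 1, f (l⁻¹ • x) / l ^ (n + 1) * ⟪x, gradient φ x⟫
    rw [show DZfield n f x
      = (-(∫ l in Set.Ioo (0 : ℝ) 1, f (l⁻¹ • x) / l ^ (n + 1))) • x from rfl,
      real_inner_smul_left, integral_mul_const]
    ring
  have h2 : ∫ x : E, ∫ l in Set.Ioo (0:ℝ) 1, f (l⁻¹ • x) / l ^ (n + 1) * ⟪x, gradient φ x⟫
      = ∫ l in Set.Ioo (0:ℝ) 1, ∫ x : E, f (l⁻¹ • x) / l ^ (n + 1) * ⟪x, gradient φ x⟫ :=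
    (integral_integral_swap hHint).symm
  have h3 : ∫ l in Set.Ioo (0:ℝ) 1, ∫ x : E, f (l⁻¹ • x) / l ^ (n + 1) * ⟪x, gradient φ x⟫
      = ∫ l in Set.Ioo (0:ℝ) 1, ∫ y : E, f y * ⟪y, gradient φ (l • y)⟫ :=
    setIntegral_congr_fun measurableSet_Ioo fun l hl => DZ.step hl
  have h4 : ∫ l in Set.Ioo (0:ℝ) 1, ∫ y : E, f y * ⟪y, gradient φ (l • y)⟫
      = ∫ y : E, ∫ l in Set.Ioo (0:ℝ) 1, f y * ⟪y, gradient φ (l • y)⟫ :=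
    integral_integral_swap hJint
  have h5 : ∫ y : E, ∫ l in Set.Ioo (0:ℝ) 1, f y * ⟪y, gradient φ (l • y)⟫
      = ∫ y : E, f y * (φ y - φ 0) := by
    refine integral_congr_ae (Eventually.of_forall fun y => ?_)
    show ∫ l in Set.Ioo (0:ℝ) 1, f y * ⟪y, gradient φ (l • y)⟫ = f y * (φ y - φ 0)
    rw [integral_const_mul, DZ.ftc hφ]
  obtain ⟨Cφ, hCφ⟩ := hφs.exists_bound_of_continuous hφ.continuous
  have hint1 : Integrable (fun y : E => f y * φ y) volume := by
    have := hf.bdd_mul hφ.continuous.aestronglyMeasurable (ae_of_all _ hCφ)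
    simpa [mul_comm] using this
  have hint2 : Integrable (fun y : E => f y * φ 0) volume := hf.mul_const _
  have h6 : ∫ y : E, f y * (φ y - φ 0) = (∫ y : E, f y * φ y) - (∫ y : E, f y) * φ 0 := by
    simp_rw [mul_sub]
    rw [integral_sub hint1 hint2, integral_mul_const]
  have hfinal : ∫ x : E, ⟪DZfield n f x, gradient φ x⟫
      = -((∫ y : E, f y * φ y) - (∫ y : E, f y) * φ 0) := by
    rw [h1, h2, h3, h4, h5, h6]
  rw [hfinal]
  ring

theorem stmt_1 (n : ℕ) (hn : 0 < n) (f : EuclideanSpace ℝ (Fin n) → ℝ)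
    (hf : Integrable f) :
    LocallyIntegrable (DZfield n f) volume ∧
      ∀ φ : EuclideanSpace ℝ (Fin n) → ℝ, ContDiff ℝ (⊤ : ℕ∞) φ → HasCompactSupport φ →
        ∫ x, f x * φ x = (∫ x, f x) * φ 0 - ∫ x, ⟪DZfield n f x, gradient φ x⟫ := by
  exact ⟨DZ.locInt hf, fun φ hφ hφs => DZ.part2 hf hφ hφs⟩
end
end

section
/- Let f ∈ L¹(ℝⁿ) and define V(x) = −x ∫₀¹ f(x/λ) λ^{−(n+1)} dλ. Then for every R ≥ 0, ∫_{|x|≤R} |V(x)| dx ≤ R ∫_{ℝⁿ} |f(x)| dx. -/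
/-!
Pointwise, `|V(x)| ≤ |x| ∫₀¹ |f(x/λ)| λ^{-(n+1)} dλ`; integrate over the ball and swap the
integrals. For fixed `λ` the substitution `x = λ y` turns `∫_{|x| ≤ R} |x| |f(x/λ)| dx` into
`λ^{n+1} ∫_{λ|y| ≤ R} |y| |f(y)| dy`, which cancels the weight. Swapping back, each `y` contributes
`|y| |f(y)|` times the length of `{λ ∈ (0,1) : λ|y| ≤ R}`, and that length is at most `R / |y|`.
-/

open MeasureTheory Filter
open scoped ENNReal

noncomputable section

open Module Set

lemma ofReal_mul_volume_restrict_Ioo_le (R : ℝ) {t : ℝ} (ht : 0 ≤ t) :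
    ENNReal.ofReal t * volume.restrict (Ioo 0 1) {l : ℝ | l * t ≤ R} ≤ ENNReal.ofReal R := by
  rcases ht.eq_or_lt with rfl | ht
  · simp
  have hsub : {l : ℝ | l * t ≤ R} ∩ Ioo 0 1 ⊆ Icc 0 (R / t) :=
    fun l ⟨hlR, hl⟩ => ⟨hl.1.le, (le_div_iff₀ ht).2 hlR⟩
  calc ENNReal.ofReal t * volume.restrict (Ioo 0 1) {l : ℝ | l * t ≤ R}
      ≤ ENNReal.ofReal t * volume (Icc 0 (R / t)) := by
        rw [Measure.restrict_apply (measurableSet_le (by fun_prop) measurable_const)]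
        exact mul_le_mul_right (measure_mono hsub) _
    _ = ENNReal.ofReal R := by
        rw [Real.volume_Icc, sub_zero, ← ENNReal.ofReal_mul ht.le, mul_div_cancel₀ _ ht.ne']

lemma lintegral_Ioo_setLIntegral_enorm_mul_le {E : Type*} [SeminormedAddCommGroup E]
    [MeasurableSpace E] [OpensMeasurableSpace E] {μ : Measure E} [SFinite μ]
    {g : E → ℝ≥0∞} (hg : AEMeasurable g μ) (R : ℝ) :
    ∫⁻ l in Ioo (0 : ℝ) 1, ∫⁻ y in {y | l * ‖y‖ ≤ R}, ‖y‖ₑ * g y ∂μ ≤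
      ENNReal.ofReal R * ∫⁻ y, g y ∂μ := by
  set A : Set (ℝ × E) := {p | p.1 * ‖p.2‖ ≤ R}
  have hA : MeasurableSet A := measurableSet_le (by fun_prop) measurable_const
  set F : ℝ × E → ℝ≥0∞ := A.indicator fun p => ‖p.2‖ₑ * g p.2
  have hF : AEMeasurable F ((volume.restrict (Ioo 0 1)).prod μ) :=
    ((by fun_prop : AEMeasurable (fun y : E => ‖y‖ₑ) μ).mul hg).comp_snd.indicator hA
  calc ∫⁻ l in Ioo (0 : ℝ) 1, ∫⁻ y in {y | l * ‖y‖ ≤ R}, ‖y‖ₑ * g y ∂μ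
      = ∫⁻ l in Ioo (0 : ℝ) 1, ∫⁻ y, F (l, y) ∂μ := by
        refine lintegral_congr fun l => ?_
        rw [← lintegral_indicator (measurableSet_le (by fun_prop) measurable_const)]
        rfl
    _ = ∫⁻ y, (∫⁻ l in Ioo (0 : ℝ) 1, F (l, y)) ∂μ :=
        lintegral_lintegral_swap (f := fun l y => F (l, y)) hF
    _ ≤ ∫⁻ y, ENNReal.ofReal R * g y ∂μ := by
        refine lintegral_mono fun y => ?_
        have hAy : MeasurableSet {l : ℝ | l * ‖y‖ ≤ R} :=
          measurableSet_le (by fun_prop) measurable_const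
        calc ∫⁻ l in Ioo (0 : ℝ) 1, F (l, y)
            = ∫⁻ l in Ioo (0 : ℝ) 1, {l : ℝ | l * ‖y‖ ≤ R}.indicator (fun _ => ‖y‖ₑ * g y) l :=
              rfl
          _ = ENNReal.ofReal ‖y‖ * volume.restrict (Ioo 0 1) {l : ℝ | l * ‖y‖ ≤ R} * g y := by
            rw [lintegral_indicator_const hAy, ofReal_norm]
            ring
          _ ≤ ENNReal.ofReal R * g y := by
            gcongr
            exact ofReal_mul_volume_restrict_Ioo_le R (norm_nonneg y)
    _ = ENNReal.ofReal R * ∫⁻ y, g y ∂μ := lintegral_const_mul' _ _ ENNReal.ofReal_ne_top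

section FiniteDimensional

variable {E : Type*} [NormedAddCommGroup E] [NormedSpace ℝ E] [MeasurableSpace E] [BorelSpace E]
  [FiniteDimensional ℝ E] (μ : Measure E) [μ.IsAddHaarMeasure]

lemma quasiMeasurePreserving_inv_smul :
    Measure.QuasiMeasurePreserving (fun p : E × ℝ => p.2⁻¹ • p.1) (μ.prod volume) μ := by
  have hφ : Measurable fun p : E × ℝ => p.2⁻¹ • p.1 := by fun_prop
  refine ⟨hφ, Measure.AbsolutelyContinuous.mk fun s hs hμs => ?_⟩
  rw [Measure.map_apply hφ hs, Measure.prod_apply_symm (hφ hs)]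
  refine lintegral_eq_zero_of_ae_eq_zero ?_
  filter_upwards [Measure.ae_ne volume 0] with r hr
  exact (Measure.addHaar_preimage_smul μ (inv_ne_zero hr) s).trans (by simp [hμs])

lemma lintegral_comp_inv_smul (h : E → ℝ≥0∞) {r : ℝ} (hr : r ≠ 0) :
    ∫⁻ x, h (r⁻¹ • x) ∂μ = ‖r‖ₑ ^ finrank ℝ E * ∫⁻ y, h y ∂μ := calc
  ∫⁻ x, h (r⁻¹ • x) ∂μ = ∫⁻ y, h y ∂(Measure.map (r⁻¹ • ·) μ) :=
    (lintegral_map_equiv h (Homeomorph.smulOfNeZero r⁻¹ (inv_ne_zero hr)).toMeasurableEquiv).symm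
  _ = ‖r‖ₑ ^ finrank ℝ E * ∫⁻ y, h y ∂μ := by
    rw [Measure.map_addHaar_smul μ (inv_ne_zero hr), lintegral_smul_measure, smul_eq_mul,
      inv_pow, inv_inv, ← Real.enorm_eq_ofReal_abs, enorm_pow]

lemma setLIntegral_enorm_mul_comp_inv_smul (g : E → ℝ≥0∞) (R : ℝ) {r : ℝ} (hr : 0 < r) :
    ∫⁻ x in {x | ‖x‖ ≤ R}, ‖x‖ₑ * g (r⁻¹ • x) ∂μ =
      ‖r‖ₑ ^ (finrank ℝ E + 1) * ∫⁻ y in {y | r * ‖y‖ ≤ R}, ‖y‖ₑ * g y ∂μ := by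
  set T : Set E := {y | r * ‖y‖ ≤ R}
  have hT : MeasurableSet T := measurableSet_le (by fun_prop) measurable_const
  have hST : {x : E | ‖x‖ ≤ R} = (r⁻¹ • ·) ⁻¹' T := by
    ext x
    simp [T, norm_smul, abs_of_pos hr, hr.ne']
  calc ∫⁻ x in {x | ‖x‖ ≤ R}, ‖x‖ₑ * g (r⁻¹ • x) ∂μ
      = ∫⁻ x, T.indicator (fun y => ‖r • y‖ₑ * g y) (r⁻¹ • x) ∂μ := by
        rw [hST, ← lintegral_indicator (measurable_const_smul _ hT)]
        refine lintegral_congr fun x => ?_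
        rw [← Set.indicator_comp_right]
        simp only [Function.comp_def, smul_inv_smul₀ hr.ne']
    _ = ‖r‖ₑ ^ (finrank ℝ E + 1) * ∫⁻ y in T, ‖y‖ₑ * g y ∂μ := by
        rw [lintegral_comp_inv_smul μ _ hr.ne', lintegral_indicator hT]
        simp_rw [enorm_smul, mul_assoc]
        rw [lintegral_const_mul' _ _ enorm_ne_top, pow_succ, mul_assoc]

lemma setLIntegral_lintegral_Ioo_le {g : E → ℝ≥0∞} (hg : AEMeasurable g μ) (R : ℝ) :
    ∫⁻ x in {x | ‖x‖ ≤ R},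
        (∫⁻ l in Ioo (0 : ℝ) 1, ‖x‖ₑ * g (l⁻¹ • x) / ‖l‖ₑ ^ (finrank ℝ E + 1)) ∂μ ≤
      ENNReal.ofReal R * ∫⁻ y, g y ∂μ := by
  have hgφ : AEMeasurable (fun p : E × ℝ => g (p.2⁻¹ • p.1))
      ((μ.restrict {x | ‖x‖ ≤ R}).prod (volume.restrict (Ioo 0 1))) :=
    hg.comp_quasiMeasurePreserving ((quasiMeasurePreserving_inv_smul μ).mono_left
      (Measure.absolutelyContinuous_restrict.prod Measure.absolutelyContinuous_restrict))
  have hmeas : AEMeasurable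
      (fun p : E × ℝ => ‖p.1‖ₑ * g (p.2⁻¹ • p.1) / ‖p.2‖ₑ ^ (finrank ℝ E + 1))
      ((μ.restrict {x | ‖x‖ ≤ R}).prod (volume.restrict (Ioo 0 1))) :=
    (measurable_fst.enorm.aemeasurable.mul hgφ).div
      (measurable_snd.enorm.pow_const _).aemeasurable
  calc ∫⁻ x in {x | ‖x‖ ≤ R},
        (∫⁻ l in Ioo (0 : ℝ) 1, ‖x‖ₑ * g (l⁻¹ • x) / ‖l‖ₑ ^ (finrank ℝ E + 1)) ∂μ
      = ∫⁻ l in Ioo (0 : ℝ) 1,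
          ∫⁻ x in {x | ‖x‖ ≤ R}, ‖x‖ₑ * g (l⁻¹ • x) / ‖l‖ₑ ^ (finrank ℝ E + 1) ∂μ :=
        lintegral_lintegral_swap
          (f := fun x l => ‖x‖ₑ * g (l⁻¹ • x) / ‖l‖ₑ ^ (finrank ℝ E + 1)) hmeas
    _ = ∫⁻ l in Ioo (0 : ℝ) 1, ∫⁻ y in {y | l * ‖y‖ ≤ R}, ‖y‖ₑ * g y ∂μ := by
        refine setLIntegral_congr_fun measurableSet_Ioo fun l hl => ?_
        have hl0 : ‖l‖ₑ ^ (finrank ℝ E + 1) ≠ 0 := pow_ne_zero _ (enorm_ne_zero.2 hl.1.ne')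
        simp_rw [div_eq_mul_inv]
        rw [lintegral_mul_const' _ _ (ENNReal.inv_ne_top.2 hl0), ← div_eq_mul_inv,
          setLIntegral_enorm_mul_comp_inv_smul μ g R hl.1, mul_comm,
          ENNReal.mul_div_cancel_right hl0 (ENNReal.pow_ne_top enorm_ne_top)]
    _ ≤ ENNReal.ofReal R * ∫⁻ y, g y ∂μ := lintegral_Ioo_setLIntegral_enorm_mul_le hg R

end FiniteDimensional

lemma enorm_DZfield_le (n : ℕ) (f : EuclideanSpace ℝ (Fin n) → ℝ)
    (x : EuclideanSpace ℝ (Fin n)) :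
    ‖DZfield n f x‖ₑ ≤ ∫⁻ l in Ioo (0 : ℝ) 1, ‖x‖ₑ * ‖f (l⁻¹ • x)‖ₑ / ‖l‖ₑ ^ (n + 1) :=
  calc ‖DZfield n f x‖ₑ
      = ‖∫ l in Ioo (0 : ℝ) 1, f (l⁻¹ • x) / l ^ (n + 1)‖ₑ * ‖x‖ₑ := by
        rw [DZfield, enorm_smul, enorm_neg]
    _ ≤ (∫⁻ l in Ioo (0 : ℝ) 1, ‖f (l⁻¹ • x) / l ^ (n + 1)‖ₑ) * ‖x‖ₑ := by
        gcongr
        exact enorm_integral_le_lintegral_enorm _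
    _ = ∫⁻ l in Ioo (0 : ℝ) 1, ‖x‖ₑ * ‖f (l⁻¹ • x)‖ₑ / ‖l‖ₑ ^ (n + 1) := by
        rw [← lintegral_mul_const' _ _ enorm_ne_top]
        refine setLIntegral_congr_fun measurableSet_Ioo fun l hl => ?_
        rw [div_eq_mul_inv, enorm_mul, enorm_inv (pow_ne_zero _ hl.1.ne'), enorm_pow,
          mul_comm, mul_div_assoc, div_eq_mul_inv]

theorem stmt_2_general (n : ℕ) (f : EuclideanSpace ℝ (Fin n) → ℝ)
    (hf : Integrable f) (R : ℝ) :
    ∫⁻ x in {x : EuclideanSpace ℝ (Fin n) | ‖x‖ ≤ R}, ‖DZfield n f x‖₊ ≤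
      ENNReal.ofReal (R * ∫ x, ‖f x‖) := by
  calc ∫⁻ x in {x : EuclideanSpace ℝ (Fin n) | ‖x‖ ≤ R}, ‖DZfield n f x‖ₑ
      ≤ ∫⁻ x in {x : EuclideanSpace ℝ (Fin n) | ‖x‖ ≤ R},
          (∫⁻ l in Ioo (0 : ℝ) 1, ‖x‖ₑ * ‖f (l⁻¹ • x)‖ₑ / ‖l‖ₑ ^ (n + 1)) :=
        lintegral_mono fun x => enorm_DZfield_le n f x
    _ ≤ ENNReal.ofReal R * ∫⁻ x, ‖f x‖ₑ := by
        simpa only [finrank_euclideanSpace_fin] using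
          setLIntegral_lintegral_Ioo_le volume hf.aemeasurable.enorm R
    _ = ENNReal.ofReal (R * ∫ x, ‖f x‖) := by
        rw [ENNReal.ofReal_mul' (integral_nonneg fun _ => norm_nonneg _),
          ofReal_integral_norm_eq_lintegral_enorm hf]

theorem stmt_2 (n : ℕ) (hn : 0 < n) (f : EuclideanSpace ℝ (Fin n) → ℝ)
    (hf : Integrable f) (R : ℝ) (hR : 0 ≤ R) :
    ∫⁻ x in {x : EuclideanSpace ℝ (Fin n) | ‖x‖ ≤ R}, ‖DZfield n f x‖₊ ≤
      ENNReal.ofReal (R * ∫ x, ‖f x‖) :=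
  stmt_2_general n f hf R
end
end

section
/- Let 1 ≤ q < n/(n−1) and let f: ℝⁿ → ℝ be measurable with |x| f(x) ∈ L^q(ℝⁿ). Define V(x) = −x ∫₀¹ f(x/λ) λ^{−(n+1)} dλ. Then ‖V‖_{L^q} ≤ C ‖|x| f‖_{L^q} for a constant C depending only on q and n. -/
/-!
With `G y = ‖y‖ |f y|` one has `|V x| ≤ ∫₀¹ G (x/λ) λ⁻ⁿ dλ`. Split `λ⁻ⁿ = λ^(-n/q) · λ^r` with
`r = n/q - n`, which is `> -1` exactly when `q < n/(n-1)`, and apply Hölder against the finite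
weight `λ^r dλ` on `(0,1)`:
`(∫₀¹ G (x/λ) λ⁻ⁿ dλ)^q ≤ (∫₀¹ λ^r dλ)^(q-1) · ∫₀¹ G (x/λ)^q λ⁻ⁿ λ^r dλ`.
After integrating in `x`, the Jacobian `λⁿ` of `x ↦ x/λ` cancels `λ⁻ⁿ`, so Tonelli gives
`‖V‖_q ≤ (r + 1)⁻¹ ‖G‖_q`.
-/

open MeasureTheory Filter
open scoped ENNReal

noncomputable section

open Set

namespace ENNReal

theorem lintegral_mul_rpow_le {α : Type*} [MeasurableSpace α] {ν : Measure α}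
    {φ w : α → ℝ≥0∞} (hφ : AEMeasurable φ ν) (hw : AEMeasurable w ν) {q : ℝ} (hq : 1 ≤ q) :
    (∫⁻ a, φ a * w a ∂ν) ^ q ≤ (∫⁻ a, w a ∂ν) ^ (q - 1) * ∫⁻ a, φ a ^ q * w a ∂ν := by
  have hq0 : 0 < q := by linarith
  have hsplit : ∀ a, φ a * w a = (φ a ^ q * w a) ^ q⁻¹ * w a ^ (1 - q⁻¹) := by
    intro a
    rw [mul_rpow_of_nonneg _ _ (inv_nonneg.2 hq0.le), ← rpow_mul, mul_inv_cancel₀ hq0.ne',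
      rpow_one, mul_assoc, ← rpow_add_of_nonneg _ _ (inv_nonneg.2 hq0.le)
        (sub_nonneg.2 (inv_le_one_of_one_le₀ hq)), add_sub_cancel, rpow_one]
  have holder : ∫⁻ a, φ a * w a ∂ν
      ≤ (∫⁻ a, φ a ^ q * w a ∂ν) ^ q⁻¹ * (∫⁻ a, w a ∂ν) ^ (1 - q⁻¹) := by
    rw [lintegral_congr hsplit]
    exact lintegral_mul_norm_pow_le ((hφ.pow_const q).mul hw) hw
      (inv_nonneg.2 hq0.le) (sub_nonneg.2 (inv_le_one_of_one_le₀ hq)) (add_sub_cancel _ _)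
  calc (∫⁻ a, φ a * w a ∂ν) ^ q
      ≤ ((∫⁻ a, φ a ^ q * w a ∂ν) ^ q⁻¹ * (∫⁻ a, w a ∂ν) ^ (1 - q⁻¹)) ^ q :=
        rpow_le_rpow holder hq0.le
    _ = (∫⁻ a, w a ∂ν) ^ (q - 1) * ∫⁻ a, φ a ^ q * w a ∂ν := by
        rw [mul_rpow_of_nonneg _ _ hq0.le, ← rpow_mul, ← rpow_mul, inv_mul_cancel₀ hq0.ne',
          rpow_one, sub_mul, one_mul, inv_mul_cancel₀ hq0.ne', mul_comm]

end ENNReal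

theorem setLIntegral_Ioo_zero_one_ofReal_rpow {r : ℝ} (hr : -1 < r) :
    ∫⁻ l in Ioo (0 : ℝ) 1, ENNReal.ofReal (l ^ r) = ENNReal.ofReal (r + 1)⁻¹ := by
  have hint : IntegrableOn (fun l : ℝ => l ^ r) (Ioo 0 1) :=
    (intervalIntegral.intervalIntegrable_rpow' hr).1.mono_set Ioo_subset_Ioc_self
  rw [← ofReal_integral_eq_lintegral_ofReal hint
    ((ae_restrict_iff' measurableSet_Ioo).2 (ae_of_all _ fun l hl => Real.rpow_nonneg hl.1.le r)),
    ← integral_Ioc_eq_integral_Ioo, ← intervalIntegral.integral_of_le zero_le_one,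
    integral_rpow (Or.inl hr), Real.one_rpow, Real.zero_rpow (by linarith), sub_zero, one_div]

namespace MeasureTheory.Measure

variable {E : Type*} [NormedAddCommGroup E] [NormedSpace ℝ E] [MeasurableSpace E] [BorelSpace E]
  [FiniteDimensional ℝ E] (μ : Measure E) [IsAddHaarMeasure μ]

theorem lintegral_comp_inv_smul (G : E → ℝ≥0∞) {R : ℝ} (hR : 0 < R) :
    ∫⁻ x, G (R⁻¹ • x) ∂μ = ENNReal.ofReal (R ^ Module.finrank ℝ E) * ∫⁻ x, G x ∂μ := by
  let e : E ≃ᵐ E := (Homeomorph.smul (Units.mk0 R⁻¹ (inv_ne_zero hR.ne'))).toMeasurableEquiv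
  calc ∫⁻ x, G (R⁻¹ • x) ∂μ = ∫⁻ x, G x ∂(map (R⁻¹ • ·) μ) := (lintegral_map_equiv G e).symm
    _ = ENNReal.ofReal (R ^ Module.finrank ℝ E) * ∫⁻ x, G x ∂μ := by
      rw [map_addHaar_smul μ (inv_ne_zero hR.ne'), lintegral_smul_measure, inv_pow, inv_inv,
        abs_of_pos (pow_pos hR _), smul_eq_mul]

end MeasureTheory.Measure

section DilationAverage

open Module

variable {E : Type*} [NormedAddCommGroup E] [NormedSpace ℝ E] [MeasurableSpace E] [BorelSpace E]
  [FiniteDimensional ℝ E] {μ : Measure E} [μ.IsAddHaarMeasure]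

def dilationAverage (G : E → ℝ≥0∞) (x : E) : ℝ≥0∞ :=
  ∫⁻ l in Ioo (0 : ℝ) 1, G (l⁻¹ • x) * ENNReal.ofReal (l ^ finrank ℝ E)⁻¹

theorem lintegral_rpow_comp_inv_smul_mul_rpow (G : E → ℝ≥0∞) {q : ℝ} (hq : 0 < q)
    {l : ℝ} (hl : 0 < l) :
    ∫⁻ x, (G (l⁻¹ • x) * ENNReal.ofReal (l ^ (-(finrank ℝ E / q)))) ^ q ∂μ
      = ∫⁻ x, G x ^ q ∂μ := by
  have hcancel : ENNReal.ofReal (l ^ finrank ℝ E) * ENNReal.ofReal (l ^ (-(finrank ℝ E / q))) ^ q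
      = 1 := by
    rw [ENNReal.ofReal_rpow_of_pos (Real.rpow_pos_of_pos hl _), ← Real.rpow_mul hl.le,
      ← ENNReal.ofReal_mul (by positivity), ← Real.rpow_natCast, ← Real.rpow_add hl,
      neg_mul, div_mul_cancel₀ _ hq.ne', add_neg_cancel, Real.rpow_zero, ENNReal.ofReal_one]
  simp_rw [ENNReal.mul_rpow_of_nonneg _ _ hq.le]
  rw [lintegral_mul_const' _ _ (ENNReal.rpow_ne_top_of_nonneg hq.le ENNReal.ofReal_ne_top),
    Measure.lintegral_comp_inv_smul μ (fun y => G y ^ q) hl, mul_right_comm, hcancel, one_mul]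

theorem lintegral_dilationAverage_rpow_le {G : E → ℝ≥0∞} (hG : Measurable G) {q : ℝ}
    (hq : 1 ≤ q) (hr : -1 < finrank ℝ E / q - finrank ℝ E) :
    ∫⁻ x, dilationAverage G x ^ q ∂μ
      ≤ ENNReal.ofReal (finrank ℝ E / q - finrank ℝ E + 1)⁻¹ ^ q * ∫⁻ x, G x ^ q ∂μ := by
  set d : ℝ := (finrank ℝ E : ℝ)
  set r := d / q - d
  have hq0 : 0 < q := by linarith
  set Φ : E → ℝ → ℝ≥0∞ := fun x l => G (l⁻¹ • x) * ENNReal.ofReal (l ^ (-(d / q)))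
  set w : ℝ → ℝ≥0∞ := fun l => ENNReal.ofReal (l ^ r)
  have hΦ : Measurable (Function.uncurry Φ) :=
    (hG.comp (measurable_snd.inv.smul measurable_fst)).mul (by fun_prop)
  have hw : Measurable w := by fun_prop
  have hfactor : ∀ x, dilationAverage G x = ∫⁻ l in Ioo (0 : ℝ) 1, Φ x l * w l := by
    intro x
    refine setLIntegral_congr_fun measurableSet_Ioo fun l hl => ?_
    rw [mul_assoc, ← ENNReal.ofReal_mul (Real.rpow_nonneg hl.1.le _), ← Real.rpow_add hl.1,
      show -(d / q) + r = -d by ring, Real.rpow_neg hl.1.le, Real.rpow_natCast]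
  have hS : ∫⁻ l in Ioo (0 : ℝ) 1, w l ≠ ∞ := by
    rw [setLIntegral_Ioo_zero_one_ofReal_rpow hr]
    exact ENNReal.ofReal_ne_top
  have hΦq : Measurable fun p : E × ℝ => Φ p.1 p.2 ^ q * w p.2 :=
    (hΦ.pow_const q).mul (hw.comp measurable_snd)
  calc ∫⁻ x, dilationAverage G x ^ q ∂μ
      ≤ ∫⁻ x, (∫⁻ l in Ioo (0 : ℝ) 1, w l) ^ (q - 1)
          * (∫⁻ l in Ioo (0 : ℝ) 1, Φ x l ^ q * w l) ∂μ := by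
        refine lintegral_mono fun x => ?_
        rw [hfactor]
        exact ENNReal.lintegral_mul_rpow_le (hΦ.comp measurable_prodMk_left).aemeasurable
          hw.aemeasurable hq
    _ = (∫⁻ l in Ioo (0 : ℝ) 1, w l) ^ (q - 1)
          * ∫⁻ l in Ioo (0 : ℝ) 1, (∫⁻ x, G x ^ q ∂μ) * w l := by
        rw [lintegral_const_mul' _ _ (ENNReal.rpow_ne_top_of_nonneg (by linarith) hS),
          lintegral_lintegral_swap hΦq.aemeasurable]
        congr 1
        refine setLIntegral_congr_fun measurableSet_Ioo fun l hl => ?_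
        rw [lintegral_mul_const' _ _ ENNReal.ofReal_ne_top]
        exact congrArg (· * w l) (lintegral_rpow_comp_inv_smul_mul_rpow G hq0 hl.1)
    _ = ENNReal.ofReal (r + 1)⁻¹ ^ q * ∫⁻ x, G x ^ q ∂μ := by
        rw [lintegral_const_mul _ hw, setLIntegral_Ioo_zero_one_ofReal_rpow hr,
          mul_comm (∫⁻ x, G x ^ q ∂μ), ← mul_assoc]
        congr 1
        simpa using (ENNReal.rpow_add_of_nonneg (x := ENNReal.ofReal (r + 1)⁻¹) (q - 1) 1
          (by linarith) zero_le_one).symm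

theorem eLpNorm_dilationAverage_le {G : E → ℝ≥0∞} (hG : Measurable G) {q : ℝ} (hq : 1 ≤ q)
    (hr : -1 < finrank ℝ E / q - finrank ℝ E) :
    eLpNorm (dilationAverage G) (ENNReal.ofReal q) μ
      ≤ ENNReal.ofReal (finrank ℝ E / q - finrank ℝ E + 1)⁻¹ * eLpNorm G (ENNReal.ofReal q) μ := by
  have hq0 : 0 < q := by linarith
  have hp : ENNReal.ofReal q ≠ 0 := ENNReal.ofReal_ne_zero_iff.2 hq0
  simp only [eLpNorm_eq_lintegral_rpow_enorm_toReal hp ENNReal.ofReal_ne_top,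
    ENNReal.toReal_ofReal hq0.le, enorm_eq_self]
  calc (∫⁻ x, dilationAverage G x ^ q ∂μ) ^ (1 / q)
      ≤ (ENNReal.ofReal (finrank ℝ E / q - finrank ℝ E + 1)⁻¹ ^ q * ∫⁻ x, G x ^ q ∂μ) ^ (1 / q) :=
        ENNReal.rpow_le_rpow (lintegral_dilationAverage_rpow_le hG hq hr) (by positivity)
    _ = _ := by
        rw [ENNReal.mul_rpow_of_nonneg _ _ (by positivity), ← ENNReal.rpow_mul,
          mul_one_div_cancel hq0.ne', ENNReal.rpow_one]

end DilationAverage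

theorem neg_one_lt_div_sub_of_lt_div_sub_one {d q : ℝ} (hd : 0 ≤ d) (hq1 : 1 ≤ q)
    (hq2 : q < d / (d - 1)) : -1 < d / q - d := by
  have hd1 : 0 < d - 1 := by
    by_contra! h
    linarith [div_nonpos_of_nonneg_of_nonpos hd h]
  have hq0 : 0 < q := by linarith
  have h : q * (d - 1) < d := (lt_div_iff₀ hd1).1 hq2
  have : d - 1 < d / q := (lt_div_iff₀ hq0).2 (by linarith)
  linarith

theorem enorm_DZfield_le_s3 (n : ℕ) (f : EuclideanSpace ℝ (Fin n) → ℝ)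
    (x : EuclideanSpace ℝ (Fin n)) :
    ‖DZfield n f x‖ₑ ≤ dilationAverage (fun y => ‖‖y‖ * f y‖ₑ) x := by
  rw [DZfield, enorm_smul, enorm_neg]
  calc ‖∫ l in Ioo (0 : ℝ) 1, f (l⁻¹ • x) / l ^ (n + 1)‖ₑ * ‖x‖ₑ
      ≤ (∫⁻ l in Ioo (0 : ℝ) 1, ‖f (l⁻¹ • x) / l ^ (n + 1)‖ₑ) * ‖x‖ₑ := by
        gcongr
        exact enorm_integral_le_lintegral_enorm _
    _ = dilationAverage (fun y => ‖‖y‖ * f y‖ₑ) x := by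
        rw [← lintegral_mul_const' _ _ enorm_ne_top, dilationAverage]
        refine setLIntegral_congr_fun measurableSet_Ioo fun l hl => ?_
        simp only [finrank_euclideanSpace_fin, ← ofReal_norm, ← ENNReal.ofReal_mul,
          norm_nonneg]
        congr 1
        rw [norm_mul, norm_norm, norm_div, norm_smul, norm_inv, Real.norm_of_nonneg hl.1.le,
          norm_pow, Real.norm_of_nonneg hl.1.le, pow_succ]
        field_simp

theorem stmt_3_general (n : ℕ) (q : ℝ) (hq1 : 1 ≤ q) (hq2 : q < n / (n - 1)) :
    ∃ C > 0, ∀ f : EuclideanSpace ℝ (Fin n) → ℝ, Measurable f →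
      MemLp (fun x => ‖x‖ * f x) (ENNReal.ofReal q) volume →
      eLpNorm (DZfield n f) (ENNReal.ofReal q) volume ≤
        ENNReal.ofReal C * eLpNorm (fun x => ‖x‖ * f x) (ENNReal.ofReal q) volume := by
  have hr := neg_one_lt_div_sub_of_lt_div_sub_one (Nat.cast_nonneg n) hq1 hq2
  refine ⟨(n / q - n + 1)⁻¹, inv_pos.2 (by linarith), fun f hf _ => ?_⟩
  calc eLpNorm (DZfield n f) (ENNReal.ofReal q) volume
      ≤ eLpNorm (dilationAverage fun y => ‖‖y‖ * f y‖ₑ) (ENNReal.ofReal q) volume :=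
        eLpNorm_mono_enorm fun x => (enorm_DZfield_le_s3 n f x).trans_eq (enorm_eq_self _).symm
    _ ≤ _ := by
        simpa only [finrank_euclideanSpace_fin, eLpNorm_enorm] using
          eLpNorm_dilationAverage_le (μ := volume) (G := fun y => ‖‖y‖ * f y‖ₑ) (by fun_prop) hq1
            (by simpa only [finrank_euclideanSpace_fin] using hr)

theorem stmt_3 (n : ℕ) (hn : 0 < n) (q : ℝ) (hq1 : 1 ≤ q) (hq2 : q < n / (n - 1)) :
    ∃ C > 0, ∀ f : EuclideanSpace ℝ (Fin n) → ℝ, Measurable f →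
      MemLp (fun x => ‖x‖ * f x) (ENNReal.ofReal q) volume →
      eLpNorm (DZfield n f) (ENNReal.ofReal q) volume ≤
        ENNReal.ofReal C * eLpNorm (fun x => ‖x‖ * f x) (ENNReal.ofReal q) volume :=
  stmt_3_general n q hq1 hq2
end
end

section
/- Let f ∈ L¹(ℝ³) and V(x) = −x∫₀¹ f(x/λ)λ^{−4}dλ. Then for every R > 0, ∫_{|x|≤R} ∫_{ℝ³} (1+|x−y|)^{−4} |V(y)| dy dx < ∞; more precisely this double integral is bounded by C(R⁴+1)‖f‖_{L¹}. -/
open MeasureTheory Filter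
open scoped ENNReal

noncomputable section

/-- The Duoandikoetxea–Zuazua vector field on ℝ³: `V(x) = -x ∫₀¹ f(x/λ) λ^{-4} dλ`. -/
def DZfield3 (f : E3 → ℝ) (x : E3) : E3 :=
  -(∫ l in Set.Ioo (0 : ℝ) 1, f (l⁻¹ • x) / l ^ 4) • x

/-!
Tonelli moves the `x`-integral onto the kernel: `G_R(y) = ∫_{|x| ≤ R} (1 + |x - y|)⁻⁴ dx` is at
most `‖(1 + |·|)⁻⁴‖₁`, and at most `|B_R| (|y|/2)⁻⁴` once `|y| ≥ 2R`. Substituting `y = λz` in the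
`λ`-integral defining `V` turns the double integral into `∫ |f z| |z| ∫₀¹ G_R(λz) dλ dz`, and
splitting the `λ`-integral at `λ|z| = 2R` bounds `|z| ∫₀¹ G_R(λz) dλ` by `2R ‖(1 + |·|)⁻⁴‖₁ + |B_1|`.
-/

open Set Metric

theorem AEMeasurable.exists_measurable_ge {α β : Type*} [MeasurableSpace α] [MeasurableSpace β]
    [Preorder β] [OrderTop β] {μ : Measure α} {φ : α → β} (hφ : AEMeasurable φ μ) :
    ∃ ψ : α → β, Measurable ψ ∧ φ ≤ ψ ∧ ψ =ᵐ[μ] φ := by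
  classical
  set N := toMeasurable μ {x | φ x ≠ hφ.mk φ x}
  have hN : ∀ᵐ x ∂μ, x ∉ N :=
    measure_eq_zero_iff_ae_notMem.1 (by rw [measure_toMeasurable]; exact hφ.ae_eq_mk)
  refine ⟨N.piecewise (fun _ => ⊤) (hφ.mk φ),
    measurable_const.piecewise (measurableSet_toMeasurable _ _) hφ.measurable_mk, fun x => ?_, ?_⟩
  · by_cases hx : x ∈ N
    · simp [hx]
    · have : φ x = hφ.mk φ x := not_not.1 fun h => hx (subset_toMeasurable _ _ h)
      simp [hx, this]
  · filter_upwards [hN, hφ.ae_eq_mk] with x hx hφx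
    simp [hx, hφx]

theorem lintegral_comp_smul {E : Type*} [NormedAddCommGroup E] [NormedSpace ℝ E]
    [MeasurableSpace E] [BorelSpace E] [FiniteDimensional ℝ E] (μ : Measure E)
    [μ.IsAddHaarMeasure] {φ : E → ℝ≥0∞} (hφ : Measurable φ) {r : ℝ} (hr : r ≠ 0) :
    ∫⁻ x, φ (r • x) ∂μ = ENNReal.ofReal |(r ^ Module.finrank ℝ E)⁻¹| * ∫⁻ x, φ x ∂μ := by
  rw [← lintegral_map hφ (measurable_const_smul r), Measure.map_addHaar_smul μ hr,
    lintegral_smul_measure, smul_eq_mul]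

theorem lintegral_Ioi_rpow_of_lt {a c : ℝ} (ha : a < -1) (hc : 0 < c) :
    ∫⁻ t in Ioi c, ENNReal.ofReal (t ^ a) = ENNReal.ofReal (-c ^ (a + 1) / (a + 1)) := by
  rw [← integral_Ioi_rpow_of_lt ha hc, ofReal_integral_eq_lintegral_ofReal
    (integrableOn_Ioi_rpow_of_lt ha hc)]
  filter_upwards [ae_restrict_mem measurableSet_Ioi] with t ht
  exact Real.rpow_nonneg (hc.trans ht).le a

theorem ENNReal.pow_mul_mul_div_pow_succ {a : ℝ≥0∞} (ha₀ : a ≠ 0) (ha : a ≠ ⊤) (n : ℕ)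
    (x y : ℝ≥0∞) : a ^ n * (x * (y / a ^ (n + 1))) = y * (x / a) := by
  rw [div_eq_mul_inv, div_eq_mul_inv, pow_succ a n,
    ENNReal.mul_inv (.inl (pow_ne_zero n ha₀)) (.inl (ENNReal.pow_ne_top ha))]
  calc a ^ n * (x * (y * ((a ^ n)⁻¹ * a⁻¹))) = a ^ n * (a ^ n)⁻¹ * (y * (x * a⁻¹)) := by ring
    _ = y * (x * a⁻¹) := by
      rw [ENNReal.mul_inv_cancel (pow_ne_zero n ha₀) (ENNReal.pow_ne_top ha), one_mul]

def decayKernel (w : E3) : ℝ≥0∞ := ENNReal.ofReal ((1 + ‖w‖) ^ (-4 : ℝ))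

def ballKernelMass (R : ℝ) (y : E3) : ℝ≥0∞ := ∫⁻ x in closedBall (0 : E3) R, decayKernel (x - y)

@[fun_prop]
theorem measurable_decayKernel : Measurable decayKernel := by
  unfold decayKernel; fun_prop

theorem lintegral_decayKernel_eq :
    ∫⁻ w, decayKernel w = ENNReal.ofReal (∫ w : E3, (1 + ‖w‖) ^ (-4 : ℝ)) :=
  (ofReal_integral_eq_lintegral_ofReal
    (integrable_one_add_norm (by norm_num : (Module.finrank ℝ E3 : ℝ) < 4))
    (ae_of_all _ fun _ => by positivity)).symm

@[fun_prop]
theorem measurable_ballKernelMass (R : ℝ) : Measurable (ballKernelMass R) :=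
  (measurable_decayKernel.comp measurable_sub).lintegral_prod_left'

theorem ballKernelMass_le (R : ℝ) (y : E3) : ballKernelMass R y ≤ ∫⁻ w, decayKernel w :=
  (setLIntegral_le_lintegral _ _).trans_eq (lintegral_sub_right_eq_self decayKernel y)

theorem ballKernelMass_le_of_two_mul_le_norm {R : ℝ} (hR : 0 < R) {y : E3} (hy : 2 * R ≤ ‖y‖) :
    ballKernelMass R y ≤
      volume (closedBall (0 : E3) R) * ENNReal.ofReal ((‖y‖ / 2) ^ (-4 : ℝ)) := by
  rw [mul_comm, ← setLIntegral_const]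
  refine setLIntegral_mono measurable_const fun x hx => ENNReal.ofReal_le_ofReal ?_
  have hx : ‖x‖ ≤ R := by simpa using hx
  refine Real.rpow_le_rpow_of_nonpos (by linarith) ?_ (by norm_num)
  linarith [norm_sub_norm_le y x, norm_sub_rev x y]

theorem mul_lintegral_Ioc_ballKernelMass_smul_le (R : ℝ) {z : E3} (hz : z ≠ 0) :
    ‖z‖ₑ * ∫⁻ l in Ioc 0 (2 * R / ‖z‖), ballKernelMass R (l • z) ≤
      ENNReal.ofReal (2 * R) * ∫⁻ w, decayKernel w := by
  have hz' : 0 < ‖z‖ := norm_pos_iff.2 hz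
  calc ‖z‖ₑ * ∫⁻ l in Ioc 0 (2 * R / ‖z‖), ballKernelMass R (l • z)
      ≤ ‖z‖ₑ * ((∫⁻ w, decayKernel w) * ENNReal.ofReal (2 * R / ‖z‖)) := by
        gcongr
        refine (setLIntegral_mono measurable_const fun l _ => ballKernelMass_le R _).trans_eq ?_
        rw [setLIntegral_const, Real.volume_Ioc, sub_zero]
    _ = ENNReal.ofReal (2 * R) * ∫⁻ w, decayKernel w := by
        rw [mul_left_comm, ← ofReal_norm, ← ENNReal.ofReal_mul hz'.le, mul_div_cancel₀ _ hz'.ne',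
          mul_comm]

theorem ballKernelMass_smul_le_of_lt {R : ℝ} (hR : 0 < R) {z : E3} (hz : z ≠ 0) {l : ℝ}
    (hl : 2 * R / ‖z‖ < l) :
    ballKernelMass R (l • z) ≤ volume (closedBall (0 : E3) R) *
      ENNReal.ofReal ((‖z‖ / 2) ^ (-4 : ℝ)) * ENNReal.ofReal (l ^ (-4 : ℝ)) := by
  have hz' : 0 < ‖z‖ := norm_pos_iff.2 hz
  have hl₀ : 0 < l := (div_pos (by positivity) hz').trans hl
  have hfar : 2 * R ≤ ‖l • z‖ := by
    rw [norm_smul, Real.norm_of_nonneg hl₀.le]; exact ((div_lt_iff₀ hz').1 hl).le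
  refine (ballKernelMass_le_of_two_mul_le_norm hR hfar).trans_eq ?_
  rw [mul_assoc, ← ENNReal.ofReal_mul (by positivity), ← Real.mul_rpow (by positivity) hl₀.le,
    norm_smul, Real.norm_of_nonneg hl₀.le, mul_comm l, mul_div_right_comm]

theorem mul_lintegral_Ioi_ballKernelMass_smul_le {R : ℝ} (hR : 0 < R) {z : E3} (hz : z ≠ 0) :
    ‖z‖ₑ * ∫⁻ l in Ioi (2 * R / ‖z‖), ballKernelMass R (l • z) ≤ volume (ball (0 : E3) 1) := by
  have hz' : 0 < ‖z‖ := norm_pos_iff.2 hz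
  have ht : 0 < 2 * R / ‖z‖ := by positivity
  have hconst : ‖z‖ * R ^ 3 * (‖z‖ / 2) ^ (-4 : ℝ) *
      (-(2 * R / ‖z‖) ^ ((-4 : ℝ) + 1) / ((-4 : ℝ) + 1)) = 2 / 3 := by
    have h4 : (‖z‖ / 2) ^ (-4 : ℝ) = ((‖z‖ / 2) ^ 4)⁻¹ := by
      rw [Real.rpow_neg (by positivity)]; norm_cast
    have h3 : (2 * R / ‖z‖) ^ ((-4 : ℝ) + 1) = ((2 * R / ‖z‖) ^ 3)⁻¹ := by
      rw [show (-4 : ℝ) + 1 = -3 by norm_num, Real.rpow_neg (by positivity)]; norm_cast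
    rw [h4, h3]
    field_simp
    ring
  have hbound : ∀ l ∈ Ioi (2 * R / ‖z‖), ballKernelMass R (l • z) ≤
      volume (closedBall (0 : E3) R) * ENNReal.ofReal ((‖z‖ / 2) ^ (-4 : ℝ)) *
        ENNReal.ofReal (l ^ (-4 : ℝ)) := fun l hl => ballKernelMass_smul_le_of_lt hR hz hl
  calc ‖z‖ₑ * ∫⁻ l in Ioi (2 * R / ‖z‖), ballKernelMass R (l • z)
      ≤ ‖z‖ₑ * (volume (closedBall (0 : E3) R) * ENNReal.ofReal ((‖z‖ / 2) ^ (-4 : ℝ)) *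
          ENNReal.ofReal (-(2 * R / ‖z‖) ^ ((-4 : ℝ) + 1) / ((-4 : ℝ) + 1))) := by
        gcongr
        refine (setLIntegral_mono (by fun_prop) hbound).trans_eq ?_
        rw [lintegral_const_mul' _ _
            (ENNReal.mul_ne_top measure_closedBall_lt_top.ne ENNReal.ofReal_ne_top),
          lintegral_Ioi_rpow_of_lt (by norm_num) ht]
    _ = volume (ball (0 : E3) 1) * ENNReal.ofReal (2 / 3) := by
        rw [Measure.addHaar_closedBall _ _ hR.le, finrank_euclideanSpace_fin, ← ofReal_norm,
          ← hconst, ENNReal.ofReal_mul (by positivity), ENNReal.ofReal_mul (by positivity),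
          ENNReal.ofReal_mul (by positivity)]
        ring
    _ ≤ volume (ball (0 : E3) 1) := mul_le_of_le_one_right' (ENNReal.ofReal_le_one.2 (by norm_num))

theorem mul_lintegral_Ioo_ballKernelMass_smul_le {R : ℝ} (hR : 0 < R) (z : E3) :
    ‖z‖ₑ * (∫⁻ l in Ioo (0 : ℝ) 1, ballKernelMass R (l • z)) ≤
      ENNReal.ofReal (2 * R) * (∫⁻ w, decayKernel w) + volume (ball (0 : E3) 1) := by
  rcases eq_or_ne z 0 with rfl | hz
  · simp
  have ht : 0 ≤ 2 * R / ‖z‖ := by positivity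
  calc ‖z‖ₑ * ∫⁻ l in Ioo (0 : ℝ) 1, ballKernelMass R (l • z)
      ≤ ‖z‖ₑ * ∫⁻ l in Ioc 0 (2 * R / ‖z‖) ∪ Ioi (2 * R / ‖z‖), ballKernelMass R (l • z) := by
        rw [Ioc_union_Ioi_eq_Ioi ht]
        gcongr
        exact Ioo_subset_Ioi_self
    _ = ‖z‖ₑ * (∫⁻ l in Ioc 0 (2 * R / ‖z‖), ballKernelMass R (l • z)) +
          ‖z‖ₑ * ∫⁻ l in Ioi (2 * R / ‖z‖), ballKernelMass R (l • z) := by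
        rw [lintegral_union measurableSet_Ioi (Ioc_disjoint_Ioi le_rfl), mul_add]
    _ ≤ _ := add_le_add (mul_lintegral_Ioc_ballKernelMass_smul_le R hz)
        (mul_lintegral_Ioi_ballKernelMass_smul_le hR hz)

def rayAvg (g : E3 → ℝ≥0∞) (y : E3) : ℝ≥0∞ :=
  ∫⁻ l in Ioo (0 : ℝ) 1, g (l⁻¹ • y) / ENNReal.ofReal (l ^ 4)

theorem enorm_DZfield3_le (f : E3 → ℝ) (y : E3) :
    ‖DZfield3 f y‖ₑ ≤ ‖y‖ₑ * rayAvg (fun z => ‖f z‖ₑ) y := by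
  rw [DZfield3, enorm_smul, enorm_neg, mul_comm]
  gcongr
  refine (enorm_integral_le_lintegral_enorm _).trans_eq (setLIntegral_congr_fun measurableSet_Ioo
    fun l hl => ?_)
  have hl4 : 0 < l ^ 4 := pow_pos hl.1 4
  rw [← ofReal_norm, norm_div, ENNReal.ofReal_div_of_pos (norm_pos_iff.2 hl4.ne'), ofReal_norm,
    Real.norm_of_nonneg hl4.le]

@[fun_prop]
theorem measurable_rayAvg {g : E3 → ℝ≥0∞} (hg : Measurable g) : Measurable (rayAvg g) :=
  ((hg.comp (measurable_fst.inv.smul measurable_snd)).div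
    (measurable_fst.pow_const 4).ennreal_ofReal).lintegral_prod_left'

theorem lintegral_mul_rayAvg {g h : E3 → ℝ≥0∞} (hg : Measurable g) (hh : Measurable h) :
    ∫⁻ y, h y * rayAvg g y = ∫⁻ z, g z * ∫⁻ l in Ioo (0 : ℝ) 1, h (l • z) / ENNReal.ofReal l := by
  have hrescale : ∀ l ∈ Ioo (0 : ℝ) 1, ∫⁻ y, h y * (g (l⁻¹ • y) / ENNReal.ofReal (l ^ 4)) =
      ∫⁻ z, g z * (h (l • z) / ENNReal.ofReal l) := by
    intro l hl
    have hF : Measurable fun y => h y * (g (l⁻¹ • y) / ENNReal.ofReal (l ^ 4)) := by fun_prop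
    have hl3 : 0 < l ^ 3 := pow_pos hl.1 3
    have hscale := lintegral_comp_smul volume hF hl.1.ne'
    simp_rw [finrank_euclideanSpace_fin, abs_of_pos (inv_pos.2 hl3), inv_smul_smul₀ hl.1.ne']
      at hscale
    calc ∫⁻ y, h y * (g (l⁻¹ • y) / ENNReal.ofReal (l ^ 4))
        = ENNReal.ofReal (l ^ 3) * ∫⁻ z, h (l • z) * (g z / ENNReal.ofReal (l ^ 4)) := by
          rw [hscale, ← mul_assoc, ← ENNReal.ofReal_mul hl3.le, mul_inv_cancel₀ hl3.ne',
            ENNReal.ofReal_one, one_mul]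
      _ = ∫⁻ z, g z * (h (l • z) / ENNReal.ofReal l) := by
          rw [← lintegral_const_mul _ (by fun_prop)]
          congr with z
          rw [ENNReal.ofReal_pow hl.1.le, ENNReal.ofReal_pow hl.1.le]
          exact ENNReal.pow_mul_mul_div_pow_succ (ENNReal.ofReal_ne_zero_iff.2 hl.1)
            ENNReal.ofReal_ne_top 3 _ _
  calc ∫⁻ y, h y * rayAvg g y
      = ∫⁻ y, ∫⁻ l in Ioo 0 1, h y * (g (l⁻¹ • y) / ENNReal.ofReal (l ^ 4)) := by
        congr with y
        exact (lintegral_const_mul _ (by fun_prop)).symm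
    _ = ∫⁻ l in Ioo 0 1, ∫⁻ y, h y * (g (l⁻¹ • y) / ENNReal.ofReal (l ^ 4)) :=
        lintegral_lintegral_swap (by fun_prop)
    _ = ∫⁻ l in Ioo 0 1, ∫⁻ z, g z * (h (l • z) / ENNReal.ofReal l) :=
        setLIntegral_congr_fun measurableSet_Ioo hrescale
    _ = ∫⁻ z, ∫⁻ l in Ioo 0 1, g z * (h (l • z) / ENNReal.ofReal l) :=
        lintegral_lintegral_swap (by fun_prop)
    _ = _ := by
        congr with z
        exact lintegral_const_mul _ (by fun_prop)

theorem lintegral_closedBall_lintegral_decayKernel_mul (R : ℝ) {h : E3 → ℝ≥0∞}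
    (hh : Measurable h) :
    ∫⁻ x in closedBall (0 : E3) R, ∫⁻ y, decayKernel (x - y) * h y =
      ∫⁻ y, ballKernelMass R y * h y := by
  rw [lintegral_lintegral_swap (by fun_prop)]
  congr with y
  exact lintegral_mul_const _ (by fun_prop)

theorem lintegral_closedBall_lintegral_decayKernel_DZfield3_le {f : E3 → ℝ} (hf : AEMeasurable f)
    {R : ℝ} (hR : 0 < R) :
    ∫⁻ x in closedBall (0 : E3) R, ∫⁻ y, decayKernel (x - y) * ‖DZfield3 f y‖ₑ ≤
      (ENNReal.ofReal (2 * R) * (∫⁻ w, decayKernel w) + volume (ball (0 : E3) 1)) *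
        ∫⁻ z, ‖f z‖ₑ := by
  -- `DZfield3 f` reads `f` along every ray, where an a.e. modification of `f` would be visible,
  -- so `‖f‖ₑ` is dominated everywhere by a measurable function with the same integral.
  obtain ⟨g, hg, hfg, hgf⟩ := hf.enorm.exists_measurable_ge
  calc ∫⁻ x in closedBall (0 : E3) R, ∫⁻ y, decayKernel (x - y) * ‖DZfield3 f y‖ₑ
      ≤ ∫⁻ x in closedBall (0 : E3) R, ∫⁻ y, decayKernel (x - y) * (‖y‖ₑ * rayAvg g y) := by
        gcongr with x y
        refine (enorm_DZfield3_le f y).trans ?_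
        gcongr
        exact lintegral_mono fun l => by gcongr; exact hfg _
    _ = ∫⁻ y, ballKernelMass R y * ‖y‖ₑ * rayAvg g y := by
        rw [lintegral_closedBall_lintegral_decayKernel_mul R (by fun_prop)]
        simp_rw [mul_assoc]
    _ = ∫⁻ z, g z * ∫⁻ l in Ioo (0 : ℝ) 1, ballKernelMass R (l • z) * ‖l • z‖ₑ / ENNReal.ofReal l :=
        lintegral_mul_rayAvg hg (by fun_prop)
    _ = ∫⁻ z, g z * (‖z‖ₑ * ∫⁻ l in Ioo (0 : ℝ) 1, ballKernelMass R (l • z)) := by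
        congr with z
        congr 1
        rw [← lintegral_const_mul _ (by fun_prop)]
        refine setLIntegral_congr_fun measurableSet_Ioo fun l hl => ?_
        rw [enorm_smul, Real.enorm_of_nonneg hl.1.le, mul_left_comm, mul_comm,
          ENNReal.mul_div_cancel_right (ENNReal.ofReal_ne_zero_iff.2 hl.1) ENNReal.ofReal_ne_top,
          mul_comm]
    _ ≤ ∫⁻ z, g z *
          (ENNReal.ofReal (2 * R) * (∫⁻ w, decayKernel w) + volume (ball (0 : E3) 1)) := by
        gcongr with z
        exact mul_lintegral_Ioo_ballKernelMass_smul_le hR z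
    _ = _ := by
        rw [lintegral_mul_const _ hg, lintegral_congr_ae hgf, mul_comm]

theorem stmt_18 :
    ∃ C > 0, ∀ f : E3 → ℝ, Integrable f → ∀ R > (0 : ℝ),
      ∫⁻ x in {x : E3 | ‖x‖ ≤ R}, ∫⁻ y,
          ENNReal.ofReal ((1 + ‖x - y‖) ^ (-4 : ℝ)) * ‖DZfield3 f y‖₊ ≤
        ENNReal.ofReal (C * (R ^ 4 + 1) * ∫ x, ‖f x‖) := by
  set J := ∫ w : E3, (1 + ‖w‖) ^ (-4 : ℝ)
  set v := volume.real (ball (0 : E3) 1)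
  have hJ : 0 ≤ J := integral_nonneg fun _ => by positivity
  have hv : 0 < v :=
    ENNReal.toReal_pos (measure_ball_pos volume 0 one_pos).ne' measure_ball_lt_top.ne
  refine ⟨2 * J + v, by positivity, fun f hf R hR => ?_⟩
  have hball : {x : E3 | ‖x‖ ≤ R} = closedBall 0 R := by ext; simp
  calc ∫⁻ x in {x : E3 | ‖x‖ ≤ R}, ∫⁻ y,
          ENNReal.ofReal ((1 + ‖x - y‖) ^ (-4 : ℝ)) * ‖DZfield3 f y‖₊
      ≤ (ENNReal.ofReal (2 * R) * ENNReal.ofReal J + ENNReal.ofReal v) *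
          ENNReal.ofReal (∫ x, ‖f x‖) := by
        rw [hball, ofReal_measureReal, ofReal_integral_norm_eq_lintegral_enorm hf,
          ← lintegral_decayKernel_eq]
        exact lintegral_closedBall_lintegral_decayKernel_DZfield3_le hf.aemeasurable hR
    _ = ENNReal.ofReal ((2 * R * J + v) * ∫ x, ‖f x‖) := by
        rw [← ENNReal.ofReal_mul (by positivity), ← ENNReal.ofReal_add (by positivity) hv.le,
          ← ENNReal.ofReal_mul (by positivity)]
    _ ≤ ENNReal.ofReal ((2 * J + v) * (R ^ 4 + 1) * ∫ x, ‖f x‖) := by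
        gcongr
        have hR4 : R ≤ R ^ 4 + 1 := by nlinarith [sq_nonneg (R ^ 2 - 1 / 2), sq_nonneg (R - 1 / 2)]
        nlinarith [mul_le_mul_of_nonneg_left hR4 hJ, mul_nonneg hv.le (pow_nonneg hR.le 4)]
end
end
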